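/- arXiv:1201.2157 — 5 statements merged into one kernel-verified Lean document; each statement's English description precedes it below -/
import Mathlib

section
/- Fix θ > 0 and x ∈ [0,1]. Let (σ_N)_{N≥1} be independent random permutations defined on a common probability space, with σ_N Ewens(θ)-distributed on S_N. Then almost surely lim_{N→∞} F^{(N)}_{σ_N}(x) = (1 − (1−x)^2)/2. -/
/-!
Inserting the point `0` into a permutation `e` of the remaining `n` points (Mathlib's
`Equiv.Perm.decomposeFin`) creates a new cycle exactly when `0` becomes a fixed point. Hence an
Ewens(θ) permutation of size `n + 1` is an Ewens(θ) permutation `e` of size `n` together with an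
independent position `p` of `0`, chosen with weight `θ` for `p = 0` and `1` otherwise.

Averaging out `p`, then the next position, and so on, is a martingale; for a function that is
1-Lipschitz for the Hamming distance, such as the number of weak exceedances among the first `k`
positions, moving `p` changes at most three values of the permutation, so the increments are
bounded by `3`. This bounds the fourth central moment by `500 n²`, so by Markov's inequality and
Borel–Cantelli the count concentrates almost surely at scale `o(N)`. The same insertion shows
`P(j ≤ σ j) = (θ + n - 1 - j) / (θ + n - 1)`, so the mean number of weak exceedances among the
first `⌊N x⌋` positions is `N (x - x² / 2) + o(N)`.
-/

open scoped BigOperators Classical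
open Finset

noncomputable section

/-- Total number of cycles of a permutation of `Fin N`, fixed points included. -/
def cycleCount {N : ℕ} (σ : Equiv.Perm (Fin N)) : ℕ :=
  Multiset.card σ.cycleType + (N - σ.cycleType.sum)

/-- Expectation of `f` under the Ewens measure with parameter `θ` on `S_N`. -/
def ewensE (θ : ℝ) (N : ℕ) (f : Equiv.Perm (Fin N) → ℝ) : ℝ :=
  (∑ σ : Equiv.Perm (Fin N), θ ^ cycleCount σ * f σ) / ∏ k ∈ Finset.range N, (θ + (k : ℝ))

/-- Probability of an event under the Ewens measure. -/
def ewensP (θ : ℝ) (N : ℕ) (A : Set (Equiv.Perm (Fin N))) : ℝ :=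
  ewensE θ N (fun σ => if σ ∈ A then 1 else 0)

/-- The Bernoulli random variable `B^{(N)}_{i,s}`, equal to 1 iff `σ i = s`. -/
def Bis {N : ℕ} (i s : Fin N) (σ : Equiv.Perm (Fin N)) : ℝ :=
  if σ i = s then 1 else 0

/-- The set partitions of a finset `S`, encoded as finsets of nonempty disjoint finsets
covering `S`. -/
def partitionsOf {ι : Type*} [DecidableEq ι] (S : Finset ι) : Finset (Finset (Finset ι)) :=
  S.powerset.powerset.filter
    (fun P => (∀ C ∈ P, C.Nonempty) ∧ ∀ j ∈ S, ∃! C, C ∈ P ∧ j ∈ C)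

/-- The joint cumulant of the family of random variables indexed by `S`, expressed through
the moments function `M` : `κ = Σ_π (−1)^{#π−1} (#π−1)! Π_{C ∈ π} M C`. -/
def cumulantOn {ι 𝕜 : Type*} [DecidableEq ι] [Field 𝕜] (S : Finset ι) (M : Finset ι → 𝕜) : 𝕜 :=
  ∑ P ∈ partitionsOf S,
    (-1 : 𝕜) ^ (P.card - 1) * ((P.card - 1).factorial : 𝕜) * ∏ C ∈ P, M C


/-- Number of weak exceedances among the first `k` positions (1-indexed positions
`1,…,k` correspond to `i : Fin N` with `(i:ℕ) < k`). -/
def countExc {N : ℕ} (σ : Equiv.Perm (Fin N)) (k : ℕ) : ℕ :=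
  (Finset.univ.filter (fun i : Fin N => (i : ℕ) < k ∧ (i : ℕ) ≤ (σ i : ℕ))).card

/-- The function `F^{(N)}_σ : [0,1] → ℝ`: equal to `(1/N) Σ_{i=1}^{Nx} B^{ex,N}_i(σ)` when
`Nx` is an integer, and affine on each interval `[i/N,(i+1)/N]`. -/
def Fex {N : ℕ} (σ : Equiv.Perm (Fin N)) (x : ℝ) : ℝ :=
  ((countExc σ ⌊(N : ℝ) * x⌋₊ : ℝ)
    + ((N : ℝ) * x - (⌊(N : ℝ) * x⌋₊ : ℝ)) *
        ((countExc σ (⌊(N : ℝ) * x⌋₊ + 1) : ℝ) - (countExc σ ⌊(N : ℝ) * x⌋₊ : ℝ))) / N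

open Equiv Equiv.Perm Filter Topology MeasureTheory

namespace Equiv.Perm

variable {α : Type*} [Fintype α] [DecidableEq α]

theorem IsCycle.swap_mul_of_apply_eq_self {c : Perm α} (hc : c.IsCycle) {a b : α}
    (ha : c a = a) (hb : c b ≠ b) : (swap a b * c).IsCycle := by
  have hab : a ≠ b := by rintro rfl; exact hb ha
  have hna : ∀ k : ℕ, (c ^ k) b ≠ a := fun k h =>
    hab ((c ^ k).injective (h.trans (pow_apply_eq_self_of_apply_eq_self ha k).symm)).symm
  have hmove : (swap a b * c) a = b := by simp [ha]
  -- Each step of `c` along the orbit of `b` is a step of `swap a b * c`, except a return to `b`,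
  -- and `b` is the image of `a`.
  have horbit : ∀ k : ℕ, (swap a b * c).SameCycle a ((c ^ k) b) := by
    intro k
    induction k with
    | zero => exact ⟨1, by simpa using hmove⟩
    | succ k ih =>
      by_cases hk : (c ^ (k + 1)) b = b
      · rw [hk]; exact ⟨1, by simpa using hmove⟩
      · have hstep : (swap a b * c) ((c ^ k) b) = (c ^ (k + 1)) b := by
          rw [mul_apply, ← mul_apply c, ← pow_succ', swap_apply_of_ne_of_ne (hna _) hk]
        exact hstep ▸ ih.trans (sameCycle_apply_right.2 SameCycle.rfl)
  refine ⟨a, by rw [hmove]; exact hab.symm, fun y hy => ?_⟩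
  by_cases hya : y = a
  · exact hya ▸ SameCycle.rfl
  have hcy : c y ≠ y := fun h => hy <| by
    rw [mul_apply, h, swap_apply_of_ne_of_ne hya]
    rintro rfl
    exact hb h
  obtain ⟨k, rfl⟩ := hc.exists_pow_eq hb hcy
  exact horbit k

theorem support_swap_mul_of_apply_eq_self {f : Perm α} {a b : α} (ha : f a = a) (hab : a ≠ b) :
    (swap a b * f).support = insert a (insert b f.support) := by
  ext x
  have hfx : f x = a ↔ x = a := ⟨fun h => f.injective (h.trans ha.symm), fun h => h ▸ ha⟩
  simp only [mem_support, Finset.mem_insert, mul_apply, swap_apply_def]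
  split_ifs <;> grind

theorem card_cycleType_swap_mul_of_apply_ne {f : Perm α} {a b : α} (ha : f a = a)
    (hb : f b ≠ b) : Multiset.card (swap a b * f).cycleType = Multiset.card f.cycleType := by
  -- `f = c * g` with `c` the cycle of `b`; the swap merges the fixed point `a` into `c`.
  set c := f.cycleOf b
  set g := f * c⁻¹
  have hc : c.IsCycle := isCycle_cycleOf f hb
  have hcb : c b ≠ b := by simpa [c] using hb
  have hca : c a = a := by rw [cycleOf_apply]; split_ifs <;> simp [ha]
  have hgc : g.Disjoint c := disjoint_mul_inv_of_mem_cycleFactorsFinset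
    (cycleOf_mem_cycleFactorsFinset_iff.2 (mem_support.2 hb))
  have hf : f = c * g := by rw [hgc.symm.commute.eq]; simp [g]
  have hga : g a = a := by rw [mul_apply, inv_eq_iff_eq.2 hca.symm, ha]
  have hmerge : (swap a b * c).Disjoint g := by
    intro x
    by_cases hx : x = a
    · exact Or.inr (hx ▸ hga)
    · refine (hgc.symm x).imp_left fun h => ?_
      rw [mul_apply, h, swap_apply_of_ne_of_ne hx]
      rintro rfl
      exact hcb h
  rw [hf, ← mul_assoc, hmerge.cycleType_mul, hgc.symm.cycleType_mul, Multiset.card_add,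
    Multiset.card_add, card_cycleType_eq_one.2 (hc.swap_mul_of_apply_eq_self hca hcb),
    card_cycleType_eq_one.2 hc]

theorem card_cycleType_swap_mul_add {f : Perm α} {a b : α} (ha : f a = a) (hab : a ≠ b) :
    Multiset.card (swap a b * f).cycleType + (#f.support + 1)
      = Multiset.card f.cycleType + #(swap a b * f).support := by
  by_cases hb : f b = b
  · have hd : (swap a b).Disjoint f := fun x => by
      by_cases hx : x = a ∨ x = b
      · rcases hx with rfl | rfl <;> simp [ha, hb]
      · push Not at hx
        exact Or.inl (swap_apply_of_ne_of_ne hx.1 hx.2)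
    rw [hd.cycleType_mul, hd.card_support_mul, card_support_swap hab, Multiset.card_add,
      card_cycleType_eq_one.2 (isCycle_swap hab)]
    omega
  · rw [card_cycleType_swap_mul_of_apply_ne ha hb, support_swap_mul_of_apply_eq_self ha hab,
      Finset.insert_eq_of_mem (mem_support.2 hb), Finset.card_insert_of_notMem (by simp [ha])]

theorem cycleCount_swap_mul_add_one {N : ℕ} {f : Perm (Fin N)} {a b : Fin N} (ha : f a = a)
    (hab : a ≠ b) : cycleCount (swap a b * f) + 1 = cycleCount f := by
  have hmerge := card_cycleType_swap_mul_add ha hab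
  have hle : #(swap a b * f).support ≤ N := by simpa using card_le_univ (swap a b * f).support
  have hlt : #f.support < N := by
    simpa using Finset.card_lt_univ_of_notMem (s := f.support) (by simpa using ha)
  simp only [cycleCount, sum_cycleType]
  omega

theorem decomposeFin_symm_zero {n : ℕ} (e : Perm (Fin n)) :
    decomposeFin.symm (0, e) = e.extendDomain (finSuccAboveEquiv 0) := by
  ext x
  cases x using Fin.cases with
  | zero => simp [extendDomain_apply_not_subtype]
  | succ i =>
    have hi : i.succ = (finSuccAboveEquiv 0 i : Fin (n + 1)) := by simp [finSuccAboveEquiv_apply]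
    rw [decomposeFin_symm_apply_succ, hi, extendDomain_apply_image]
    simp [finSuccAboveEquiv_apply]

theorem decomposeFin_symm_eq_swap_mul {n : ℕ} (p : Fin (n + 1)) (e : Perm (Fin n)) :
    decomposeFin.symm (p, e) = swap 0 p * decomposeFin.symm (0, e) := by
  ext x
  cases x using Fin.cases <;> simp

theorem cycleCount_decomposeFin_symm {n : ℕ} (p : Fin (n + 1)) (e : Perm (Fin n)) :
    cycleCount (decomposeFin.symm (p, e)) = cycleCount e + if p = 0 then 1 else 0 := by
  have hzero : cycleCount (decomposeFin.symm (0, e)) = cycleCount e + 1 := by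
    have hle : e.cycleType.sum ≤ n := by simpa [sum_cycleType] using card_le_univ e.support
    simp only [cycleCount, decomposeFin_symm_zero, cycleType_extendDomain]
    omega
  split_ifs with hp
  · rw [hp, hzero]
  · rw [decomposeFin_symm_eq_swap_mul, ← add_left_inj 1,
      cycleCount_swap_mul_add_one (by simp) (Ne.symm hp), hzero]

end Equiv.Perm

section WeightedAverage

variable {ι κ : Type*} [Fintype ι] [Fintype κ]

def wavg (w f : ι → ℝ) : ℝ := (∑ i, w i * f i) / ∑ i, w i

variable {w : ι → ℝ}

theorem wavg_add_const_mul (hw : ∑ i, w i ≠ 0) (a b : ℝ) (f : ι → ℝ) :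
    wavg w (fun i => a + b * f i) = a + b * wavg w f := by
  have hsum : ∑ i, w i * (a + b * f i) = a * ∑ i, w i + b * ∑ i, w i * f i := by
    simp only [mul_add, Finset.sum_add_distrib, Finset.mul_sum]
    congr 1 <;> exact Finset.sum_congr rfl fun i _ => by ring
  rw [wavg, wavg, hsum]
  field_simp

theorem wavg_const (hw : ∑ i, w i ≠ 0) (a : ℝ) : wavg w (fun _ => a) = a := by
  simpa using wavg_add_const_mul hw a 0 0

theorem wavg_sub_wavg (hw : ∑ i, w i ≠ 0) (f : ι → ℝ) : wavg w (fun i => f i - wavg w f) = 0 := by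
  simpa [neg_add_eq_sub] using wavg_add_const_mul hw (-wavg w f) 1 f

theorem wavg_finset_sum {τ : Type*} (s : Finset τ) (F : τ → ι → ℝ) :
    wavg w (fun i => ∑ j ∈ s, F j i) = ∑ j ∈ s, wavg w (F j) := by
  simp only [wavg, Finset.mul_sum, ← Finset.sum_div]
  rw [Finset.sum_comm]

theorem wavg_mono (hw : ∀ i, 0 ≤ w i) {f g : ι → ℝ} (h : ∀ i, f i ≤ g i) :
    wavg w f ≤ wavg w g :=
  div_le_div_of_nonneg_right (Finset.sum_le_sum fun i _ => mul_le_mul_of_nonneg_left (h i) (hw i))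
    (Finset.sum_nonneg fun i _ => hw i)

theorem wavg_sub (f g : ι → ℝ) : wavg w (fun i => f i - g i) = wavg w f - wavg w g := by
  simp only [wavg, mul_sub, Finset.sum_sub_distrib, sub_div]

theorem abs_wavg_sub_wavg_le (hw : ∀ i, 0 ≤ w i) (hw' : ∑ i, w i ≠ 0) {f g : ι → ℝ} {b : ℝ}
    (h : ∀ i, |f i - g i| ≤ b) : |wavg w f - wavg w g| ≤ b := by
  rw [← wavg_sub, abs_le]
  constructor
  · simpa [wavg_const hw'] using wavg_mono hw (fun i => (abs_le.1 (h i)).1)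
  · simpa [wavg_const hw'] using wavg_mono hw (fun i => (abs_le.1 (h i)).2)

theorem wavg_comp_equiv (e : κ ≃ ι) (f : ι → ℝ) : wavg (w ∘ e) (f ∘ e) = wavg w f := by
  simp only [wavg, Function.comp_apply, e.sum_comp (fun i => w i * f i), e.sum_comp w]

theorem wavg_prod (w : ι → ℝ) (v : κ → ℝ) (F : ι × κ → ℝ) :
    wavg (fun q => w q.1 * v q.2) F = wavg v (fun j => wavg w (fun i => F (i, j))) := by
  have hnum : ∑ q : ι × κ, w q.1 * v q.2 * F q = ∑ j, v j * ∑ i, w i * F (i, j) := by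
    rw [Fintype.sum_prod_type, Finset.sum_comm]
    refine Finset.sum_congr rfl fun j _ => ?_
    rw [Finset.mul_sum]
    exact Finset.sum_congr rfl fun i _ => by ring
  have hden : ∑ q : ι × κ, w q.1 * v q.2 = (∑ i, w i) * ∑ j, v j := by
    rw [Fintype.sum_prod_type, Finset.sum_mul_sum]
  simp only [wavg, ← mul_div_assoc, ← Finset.sum_div, div_div, hnum, hden]

theorem wavg_sub_sq_le (hw : ∀ i, 0 ≤ w i) (hw' : ∑ i, w i ≠ 0) {g : ι → ℝ} {b : ℝ}
    (hg : ∀ i, |g i - wavg w g| ≤ b) (c : ℝ) :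
    wavg w (fun i => (g i - c) ^ 2) ≤ (wavg w g - c) ^ 2 + b ^ 2 := by
  set M := wavg w g - c
  calc wavg w (fun i => (g i - c) ^ 2)
      ≤ wavg w (fun i => (M ^ 2 + b ^ 2) + 2 * M * (g i - wavg w g)) := by
        refine wavg_mono hw fun i => ?_
        have hd := sq_le_sq' (abs_le.1 (hg i)).1 (abs_le.1 (hg i)).2
        have hgi : g i - c = M + (g i - wavg w g) := by ring
        rw [hgi]
        nlinarith
    _ = M ^ 2 + b ^ 2 := by rw [wavg_add_const_mul hw', wavg_sub_wavg hw', mul_zero, add_zero]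

theorem wavg_sub_pow_four_le (hw : ∀ i, 0 ≤ w i) (hw' : ∑ i, w i ≠ 0) {g : ι → ℝ} {b : ℝ}
    (hg : ∀ i, |g i - wavg w g| ≤ b) (c : ℝ) :
    wavg w (fun i => (g i - c) ^ 4)
      ≤ (wavg w g - c) ^ 4 + 8 * b ^ 2 * (wavg w g - c) ^ 2 + 3 * b ^ 4 := by
  set M := wavg w g - c
  calc wavg w (fun i => (g i - c) ^ 4)
      ≤ wavg w (fun i => (M ^ 4 + 8 * b ^ 2 * M ^ 2 + 3 * b ^ 4)
          + 4 * M ^ 3 * (g i - wavg w g)) := by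
        refine wavg_mono hw fun i => ?_
        set d := g i - wavg w g
        have hd := sq_le_sq' (abs_le.1 (hg i)).1 (abs_le.1 (hg i)).2
        have hgi : g i - c = M + d := by ring
        rw [hgi]
        -- `4 M d³ ≤ 2 M² d² + 2 d⁴` by AM-GM, then `d² ≤ b²` throughout.
        nlinarith [sq_nonneg (M * d - d ^ 2), mul_le_mul_of_nonneg_left hd (sq_nonneg M),
          mul_le_mul hd hd (sq_nonneg d) (sq_nonneg b)]
    _ = M ^ 4 + 8 * b ^ 2 * M ^ 2 + 3 * b ^ 4 := by
        rw [wavg_add_const_mul hw', wavg_sub_wavg hw', mul_zero, add_zero]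

end WeightedAverage

section Ewens

variable {θ : ℝ} {n : ℕ}

/-- Relative Ewens weight of inserting `0` at position `p`: for `p = 0` the point `0` becomes a
new fixed point, i.e. a new cycle. -/
def insertWeight (θ : ℝ) (n : ℕ) (p : Fin (n + 1)) : ℝ := if p = 0 then θ else 1

theorem insertWeight_nonneg (hθ : 0 < θ) (p : Fin (n + 1)) : 0 ≤ insertWeight θ n p := by
  unfold insertWeight; split_ifs <;> linarith

theorem sum_insertWeight (θ : ℝ) (n : ℕ) : ∑ p, insertWeight θ n p = θ + n := by
  simp [insertWeight, Fin.sum_univ_succ, Fin.succ_ne_zero]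

theorem sum_insertWeight_ne_zero (hθ : 0 < θ) : ∑ p, insertWeight θ n p ≠ 0 := by
  rw [sum_insertWeight]; positivity

theorem pow_cycleCount_decomposeFin_symm (θ : ℝ) (p : Fin (n + 1)) (e : Perm (Fin n)) :
    θ ^ cycleCount (decomposeFin.symm (p, e)) = insertWeight θ n p * θ ^ cycleCount e := by
  rw [cycleCount_decomposeFin_symm, insertWeight]
  split_ifs <;> ring

theorem sum_pow_cycleCount (θ : ℝ) :
    ∀ n : ℕ, ∑ σ : Perm (Fin n), θ ^ cycleCount σ = ∏ k ∈ range n, (θ + k)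
  | 0 => by simp [cycleCount]
  | n + 1 => by
    rw [← decomposeFin.symm.sum_comp, Fintype.sum_prod_type]
    simp only [pow_cycleCount_decomposeFin_symm, ← Finset.mul_sum, ← Finset.sum_mul,
      sum_insertWeight, sum_pow_cycleCount θ n, prod_range_succ]
    ring

theorem ewensE_eq_wavg (θ : ℝ) (f : Perm (Fin n) → ℝ) :
    ewensE θ n f = wavg (fun σ => θ ^ cycleCount σ) f := by
  rw [ewensE, wavg, sum_pow_cycleCount]

theorem sum_pow_cycleCount_ne_zero (hθ : 0 < θ) (n : ℕ) :
    ∑ σ : Perm (Fin n), θ ^ cycleCount σ ≠ 0 := by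
  rw [sum_pow_cycleCount]
  exact (prod_pos fun k _ => by positivity).ne'

theorem ewensE_const (hθ : 0 < θ) (a : ℝ) : ewensE θ n (fun _ => a) = a := by
  rw [ewensE_eq_wavg, wavg_const (sum_pow_cycleCount_ne_zero hθ n)]

theorem ewensE_add (f g : Perm (Fin n) → ℝ) :
    ewensE θ n (fun σ => f σ + g σ) = ewensE θ n f + ewensE θ n g := by
  simp only [ewensE, mul_add, sum_add_distrib, add_div]

theorem ewensE_const_mul (a : ℝ) (f : Perm (Fin n) → ℝ) :
    ewensE θ n (fun σ => a * f σ) = a * ewensE θ n f := by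
  simp only [ewensE, mul_left_comm _ a, ← mul_sum, mul_div_assoc]

theorem ewensE_finset_sum {τ : Type*} (s : Finset τ) (F : τ → Perm (Fin n) → ℝ) :
    ewensE θ n (fun σ => ∑ j ∈ s, F j σ) = ∑ j ∈ s, ewensE θ n (F j) := by
  simp only [ewensE_eq_wavg, wavg_finset_sum]

theorem ewensE_mono (hθ : 0 < θ) {f g : Perm (Fin n) → ℝ} (h : ∀ σ, f σ ≤ g σ) :
    ewensE θ n f ≤ ewensE θ n g := by
  simp only [ewensE_eq_wavg]
  exact wavg_mono (fun σ => by positivity) h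

theorem ewensE_zero (θ : ℝ) (f : Perm (Fin 0) → ℝ) : ewensE θ 0 f = f 1 := by
  simp [ewensE, cycleCount]

/-- The conditional expectation of `f` given the permutation `e` of the points other than `0`. -/
def insertAvg (θ : ℝ) (f : Perm (Fin (n + 1)) → ℝ) (e : Perm (Fin n)) : ℝ :=
  wavg (insertWeight θ n) (fun p => f (decomposeFin.symm (p, e)))

theorem ewensE_succ (θ : ℝ) (f : Perm (Fin (n + 1)) → ℝ) :
    ewensE θ (n + 1) f = ewensE θ n (insertAvg θ f) := by
  have hweight : (fun σ => θ ^ cycleCount σ) ∘ decomposeFin.symm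
      = fun q : Fin (n + 1) × Perm (Fin n) => insertWeight θ n q.1 * θ ^ cycleCount q.2 :=
    funext fun q => pow_cycleCount_decomposeFin_symm θ q.1 q.2
  rw [ewensE_eq_wavg, ewensE_eq_wavg, ← wavg_comp_equiv decomposeFin.symm, hweight]
  exact wavg_prod (insertWeight θ n) (fun σ => θ ^ cycleCount σ) _

end Ewens

section Concentration

variable {θ : ℝ} {n : ℕ}

def HammingLipschitz (f : Perm (Fin n) → ℝ) : Prop :=
  ∀ σ τ : Perm (Fin n), |f σ - f τ| ≤ hammingDist ⇑σ ⇑τ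

theorem hammingDist_decomposeFin_symm_snd (p : Fin (n + 1)) (e e' : Perm (Fin n)) :
    hammingDist ⇑(decomposeFin.symm (p, e)) ⇑(decomposeFin.symm (p, e')) = hammingDist ⇑e ⇑e' := by
  simp [hammingDist, Finset.card_filter, Fin.sum_univ_succ]

theorem hammingDist_decomposeFin_symm_fst_le (p p' : Fin (n + 1)) (e : Perm (Fin n)) :
    hammingDist ⇑(decomposeFin.symm (p, e)) ⇑(decomposeFin.symm (p', e)) ≤ 3 := by
  set t := decomposeFin.symm (0, e)
  calc hammingDist ⇑(decomposeFin.symm (p, e)) ⇑(decomposeFin.symm (p', e))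
      ≤ #(({0, p, p'} : Finset (Fin (n + 1))).map t.symm.toEmbedding) := by
        refine card_le_card fun x hx => ?_
        rw [mem_filter, decomposeFin_symm_eq_swap_mul p, decomposeFin_symm_eq_swap_mul p'] at hx
        simp only [mem_map_equiv, Equiv.symm_symm, mem_insert, mem_singleton]
        by_contra! h
        exact hx.2 (by simp [swap_apply_of_ne_of_ne, h.1, h.2.1, h.2.2, t])
    _ ≤ 3 := by rw [card_map]; exact card_le_three

theorem hammingLipschitz_insertAvg (hθ : 0 < θ) {f : Perm (Fin (n + 1)) → ℝ}
    (hf : HammingLipschitz f) : HammingLipschitz (insertAvg θ f) := fun e e' =>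
  abs_wavg_sub_wavg_le (insertWeight_nonneg hθ) (sum_insertWeight_ne_zero hθ) fun p =>
    hammingDist_decomposeFin_symm_snd p e e' ▸ hf _ _

theorem abs_sub_insertAvg_le (hθ : 0 < θ) {f : Perm (Fin (n + 1)) → ℝ}
    (hf : HammingLipschitz f) (p : Fin (n + 1)) (e : Perm (Fin n)) :
    |f (decomposeFin.symm (p, e)) - insertAvg θ f e| ≤ 3 := by
  rw [← wavg_const (sum_insertWeight_ne_zero hθ) (f (decomposeFin.symm (p, e)))]
  refine abs_wavg_sub_wavg_le (insertWeight_nonneg hθ) (sum_insertWeight_ne_zero hθ) fun p' => ?_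
  exact (hf _ _).trans (by exact_mod_cast hammingDist_decomposeFin_symm_fst_le p p' e)

theorem ewensE_sub_sq_le (hθ : 0 < θ) :
    ∀ {n : ℕ} {f : Perm (Fin n) → ℝ}, HammingLipschitz f →
      ewensE θ n (fun σ => (f σ - ewensE θ n f) ^ 2) ≤ 9 * n
  | 0, f, _ => by simp [ewensE_zero]
  | n + 1, f, hf => by
    have ih := ewensE_sub_sq_le hθ (hammingLipschitz_insertAvg hθ hf)
    rw [← ewensE_succ] at ih
    set c := ewensE θ (n + 1) f
    calc ewensE θ (n + 1) (fun σ => (f σ - c) ^ 2)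
        ≤ ewensE θ n (fun e => (insertAvg θ f e - c) ^ 2 + 3 ^ 2) := by
          rw [ewensE_succ]
          exact ewensE_mono hθ fun e => wavg_sub_sq_le (insertWeight_nonneg hθ)
            (sum_insertWeight_ne_zero hθ) (abs_sub_insertAvg_le hθ hf · e) c
      _ ≤ 9 * (n + 1 : ℕ) := by
          rw [ewensE_add, ewensE_const hθ]
          push_cast
          linarith

theorem ewensE_sub_pow_four_le (hθ : 0 < θ) :
    ∀ {n : ℕ} {f : Perm (Fin n) → ℝ}, HammingLipschitz f →
      ewensE θ n (fun σ => (f σ - ewensE θ n f) ^ 4) ≤ 500 * n ^ 2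
  | 0, f, _ => by simp [ewensE_zero]
  | n + 1, f, hf => by
    have ih4 := ewensE_sub_pow_four_le hθ (hammingLipschitz_insertAvg hθ hf)
    have ih2 := ewensE_sub_sq_le hθ (hammingLipschitz_insertAvg hθ hf)
    rw [← ewensE_succ] at ih4 ih2
    set c := ewensE θ (n + 1) f
    calc ewensE θ (n + 1) (fun σ => (f σ - c) ^ 4)
        ≤ ewensE θ n (fun e => (insertAvg θ f e - c) ^ 4
            + 8 * 3 ^ 2 * (insertAvg θ f e - c) ^ 2 + 3 * 3 ^ 4) := by
          rw [ewensE_succ]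
          exact ewensE_mono hθ fun e => wavg_sub_pow_four_le (insertWeight_nonneg hθ)
            (sum_insertWeight_ne_zero hθ) (abs_sub_insertAvg_le hθ hf · e) c
      _ ≤ 500 * (n + 1 : ℕ) ^ 2 := by
          -- `500` is any constant with `500 n² + 72 · 9 n + 243 ≤ 500 (n + 1)²`.
          rw [ewensE_add, ewensE_add, ewensE_const_mul, ewensE_const hθ]
          push_cast
          nlinarith

end Concentration

section Mean

variable {θ : ℝ} {n : ℕ}

def weakExc (j : Fin n) (σ : Perm (Fin n)) : ℝ := if (j : ℕ) ≤ σ j then 1 else 0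

theorem weakExc_succ_decomposeFin_symm (j : Fin n) (p : Fin (n + 1)) (e : Perm (Fin n)) :
    weakExc j.succ (decomposeFin.symm (p, e)) = if p = (e j).succ then 0 else weakExc j e := by
  rw [weakExc, weakExc, decomposeFin_symm_apply_succ]
  by_cases hp : p = (e j).succ
  · simp [hp]
  · rw [swap_apply_of_ne_of_ne (Fin.succ_ne_zero _) (Ne.symm hp)]
    simp [hp]

theorem insertAvg_weakExc_succ (hθ : 0 < θ) (j : Fin n) (e : Perm (Fin n)) :
    insertAvg θ (weakExc j.succ) e = (θ + n - 1) / (θ + n) * weakExc j e := by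
  set t := (e j).succ
  have hterm : ∀ p, insertWeight θ n p * weakExc j.succ (decomposeFin.symm (p, e))
      = insertWeight θ n p * weakExc j e - if p = t then weakExc j e else 0 := by
    intro p
    rw [weakExc_succ_decomposeFin_symm]
    split_ifs with hp
    · simp [hp, insertWeight, Fin.succ_ne_zero]
    · ring
  rw [insertAvg, wavg, Finset.sum_congr rfl fun p _ => hterm p, sum_sub_distrib, ← sum_mul,
    sum_ite_eq', if_pos (mem_univ t), sum_insertWeight]
  field_simp

theorem ewensE_weakExc (hθ : 0 < θ) :
    ∀ {n : ℕ} (j : Fin n), ewensE θ n (weakExc j) = (θ + n - 1 - j) / (θ + n - 1)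
  | n + 1, j => by
    cases j using Fin.cases with
    | zero =>
      have hone : weakExc (0 : Fin (n + 1)) = fun _ => 1 := funext fun σ => by simp [weakExc]
      rw [hone, ewensE_const hθ]
      push_cast
      rw [Fin.val_zero, Nat.cast_zero, sub_zero, div_self]
      linarith [(n.cast_nonneg : (0 : ℝ) ≤ n)]
    | succ i =>
      have hn : (1 : ℝ) ≤ n := by exact_mod_cast i.pos
      have h1 : θ + n - 1 ≠ 0 := by linarith
      have h2 : θ + n ≠ 0 := by linarith
      rw [ewensE_succ, funext (insertAvg_weakExc_succ hθ i), ewensE_const_mul, ewensE_weakExc hθ i]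
      push_cast [Fin.val_succ]
      rw [show θ + (n + 1 : ℝ) - 1 = θ + n by ring]
      field_simp
      ring

theorem countExc_eq_sum_weakExc (σ : Perm (Fin n)) (K : ℕ) :
    (countExc σ K : ℝ) = ∑ j ∈ univ.filter (fun j : Fin n => (j : ℕ) < K), weakExc j σ := by
  rw [countExc, ← filter_filter, card_filter]
  push_cast
  rfl

theorem sum_range_natCast (K : ℕ) : ∑ j ∈ range K, (j : ℝ) = K * (K - 1) / 2 := by
  induction K with
  | zero => simp
  | succ K ih => rw [sum_range_succ, ih]; push_cast; ring

theorem ewensE_countExc (hθ : 0 < θ) {K : ℕ} (hK : K ≤ n) :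
    ewensE θ n (fun σ => (countExc σ K : ℝ)) = K - K * (K - 1) / 2 / (θ + n - 1) := by
  have hrange : (range n).filter (· < K) = range K := by
    ext j
    simp only [mem_filter, mem_range]
    omega
  rcases Nat.eq_zero_or_pos n with rfl | hn
  · obtain rfl : K = 0 := by omega
    simp [ewensE_zero, countExc]
  have hc : θ + n - 1 ≠ 0 := by linarith [(Nat.one_le_cast.2 hn : (1 : ℝ) ≤ n)]
  simp only [countExc_eq_sum_weakExc, ewensE_finset_sum, ewensE_weakExc hθ]
  rw [sum_filter, Fin.sum_univ_eq_sum_range (fun j => if j < K then (θ + n - 1 - j) / (θ + n - 1)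
    else 0), ← sum_filter, hrange, ← sum_div, sum_sub_distrib, sum_range_natCast]
  simp only [sum_const, card_range, nsmul_eq_mul]
  field_simp

end Mean

section Limit

variable {θ : ℝ}

theorem tendsto_ewensE_countExc_div (hθ : 0 < θ) {x : ℝ} (hx₀ : 0 ≤ x) (hx₁ : x ≤ 1) :
    Tendsto (fun N : ℕ => ewensE θ N (fun σ => (countExc σ ⌊(N : ℝ) * x⌋₊ : ℝ)) / N) atTop
      (𝓝 (x - x ^ 2 / 2)) := by
  set K : ℕ → ℝ := fun N => ⌊(N : ℝ) * x⌋₊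
  have hK : Tendsto (fun N : ℕ => K N / N) atTop (𝓝 x) := by
    simpa [K, mul_comm, Function.comp_def] using
      (tendsto_nat_floor_mul_div_atTop hx₀).comp tendsto_natCast_atTop_atTop
  have hinv : Tendsto (fun N : ℕ => 1 / (N : ℝ)) atTop (𝓝 0) := tendsto_one_div_atTop_nhds_zero_nat
  have hden : Tendsto (fun N : ℕ => 1 + (θ - 1) / N) atTop (𝓝 1) := by
    simpa using (tendsto_const_div_atTop_nhds_zero_nat (θ - 1)).const_add 1
  have hlim := hK.sub ((hK.mul ((hK.sub hinv).div hden one_ne_zero)).div_const 2)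
  rw [show x - x ^ 2 / 2 = x - x * ((x - 0) / 1) / 2 by ring]
  refine hlim.congr' ?_
  filter_upwards [eventually_ge_atTop 1] with N hN
  have hN : (1 : ℝ) ≤ N := by exact_mod_cast hN
  have hKN : ⌊(N : ℝ) * x⌋₊ ≤ N := Nat.floor_le_of_le (by nlinarith)
  have hc : θ + N - 1 ≠ 0 := by linarith
  have hc' : (N : ℝ) + (θ - 1) ≠ 0 := by linarith
  rw [ewensE_countExc hθ hKN]
  simp only [Pi.div_apply, K]
  field_simp
  ring

end Limit

section Exceedances

variable {n : ℕ}

theorem countExc_mono (σ : Perm (Fin n)) {k l : ℕ} (h : k ≤ l) : countExc σ k ≤ countExc σ l :=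
  card_le_card fun i => by simp only [mem_filter, mem_univ, true_and]; omega

theorem countExc_succ_le (σ : Perm (Fin n)) (k : ℕ) : countExc σ (k + 1) ≤ countExc σ k + 1 := by
  have hsub : univ.filter (fun i : Fin n => (i : ℕ) < k + 1 ∧ (i : ℕ) ≤ σ i)
      ⊆ univ.filter (fun i : Fin n => (i : ℕ) < k ∧ (i : ℕ) ≤ σ i)
        ∪ univ.filter (fun i : Fin n => (i : ℕ) = k) := fun i => by
    simp only [mem_filter, mem_union, mem_univ, true_and]; omega
  have hone : #(univ.filter fun i : Fin n => (i : ℕ) = k) ≤ 1 :=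
    card_le_one.2 fun a ha b hb => Fin.ext (by simp_all)
  exact (card_le_card hsub).trans ((card_union_le _ _).trans (by unfold countExc; omega))

theorem countExc_le_add_hammingDist (σ τ : Perm (Fin n)) (k : ℕ) :
    countExc σ k ≤ countExc τ k + hammingDist ⇑σ ⇑τ := by
  refine (card_le_card fun i hi => ?_).trans (card_union_le _ _)
  by_cases h : σ i = τ i <;> simp_all

theorem hammingLipschitz_countExc (k : ℕ) :
    HammingLipschitz (fun σ : Perm (Fin n) => (countExc σ k : ℝ)) := fun σ τ => by
  have h₁ : (countExc σ k : ℝ) ≤ countExc τ k + hammingDist ⇑σ ⇑τ := by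
    exact_mod_cast countExc_le_add_hammingDist σ τ k
  have h₂ : (countExc τ k : ℝ) ≤ countExc σ k + hammingDist ⇑σ ⇑τ := by
    exact_mod_cast hammingDist_comm (⇑τ) ⇑σ ▸ countExc_le_add_hammingDist τ σ k
  exact abs_sub_le_iff.2 ⟨by linarith, by linarith⟩

theorem abs_Fex_sub_countExc_div_le (σ : Perm (Fin n)) {x : ℝ} (hx : 0 ≤ x) :
    |Fex σ x - countExc σ ⌊(n : ℝ) * x⌋₊ / n| ≤ 1 / n := by
  set K := ⌊(n : ℝ) * x⌋₊
  have hfrac₀ : 0 ≤ (n : ℝ) * x - K := sub_nonneg.2 (Nat.floor_le (by positivity))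
  have hfrac₁ : (n : ℝ) * x - K ≤ 1 := by linarith [Nat.lt_floor_add_one ((n : ℝ) * x)]
  have hstep₀ : (countExc σ K : ℝ) ≤ countExc σ (K + 1) := by
    exact_mod_cast countExc_mono σ K.le_succ
  have hstep₁ : (countExc σ (K + 1) : ℝ) ≤ countExc σ K + 1 := by
    exact_mod_cast countExc_succ_le σ K
  rw [Fex, ← sub_div, abs_div, Nat.abs_cast, add_sub_cancel_left]
  refine div_le_div_of_nonneg_right ?_ n.cast_nonneg
  rw [abs_le]
  constructor <;> nlinarith

end Exceedances

section Probability

open ENNReal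

variable {θ : ℝ} {n : ℕ}

theorem ewensP_lt_abs_sub_le (hθ : 0 < θ) {f : Perm (Fin n) → ℝ} (hf : HammingLipschitz f)
    {δ : ℝ} (hδ : 0 < δ) :
    ewensP θ n {σ | δ * n < |f σ - ewensE θ n f|} ≤ 500 / (δ ^ 4 * n ^ 2) := by
  rcases Nat.eq_zero_or_pos n with rfl | hn
  · simp [ewensP, ewensE_zero]
  have hδn : 0 < δ * n := by positivity
  set m := ewensE θ n f
  calc ewensP θ n {σ | δ * n < |f σ - m|}
      ≤ ewensE θ n (fun σ => ((δ * n) ^ 4)⁻¹ * (f σ - m) ^ 4) := by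
        refine ewensE_mono hθ fun σ => ?_
        split_ifs with h
        · rw [le_inv_mul_iff₀ (by positivity), mul_one]
          exact (pow_le_pow_left₀ hδn.le (le_of_lt h) 4).trans_eq
            (by rw [pow_abs, abs_of_nonneg (by positivity)])
        · positivity
    _ ≤ ((δ * n) ^ 4)⁻¹ * (500 * n ^ 2) := by
        rw [ewensE_const_mul]
        exact mul_le_mul_of_nonneg_left (ewensE_sub_pow_four_le hθ hf) (by positivity)
    _ = 500 / (δ ^ 4 * n ^ 2) := by
        field_simp

theorem measure_preimage_le_ofReal_ewensP (hθ : 0 < θ) {Ω : Type*} [MeasurableSpace Ω]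
    {μ : Measure Ω} {σ : Ω → Perm (Fin n)}
    (hdist : ∀ σ₀, μ {ω | σ ω = σ₀} = .ofReal (θ ^ cycleCount σ₀ / ∏ k ∈ range n, (θ + k)))
    (A : Set (Perm (Fin n))) : μ (σ ⁻¹' A) ≤ .ofReal (ewensP θ n A) := by
  have hZ : 0 < ∏ k ∈ range n, (θ + k) := prod_pos fun k _ => by positivity
  have hA : σ ⁻¹' A = ⋃ σ₀ ∈ univ.filter (· ∈ A), {ω | σ ω = σ₀} := by
    ext ω; simp
  calc μ (σ ⁻¹' A) ≤ ∑ σ₀ ∈ univ.filter (· ∈ A), μ {ω | σ ω = σ₀} :=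
        hA ▸ measure_biUnion_finset_le _ _
    _ = .ofReal (∑ σ₀ ∈ univ.filter (· ∈ A), θ ^ cycleCount σ₀ / ∏ k ∈ range n, (θ + k)) := by
        rw [ofReal_sum_of_nonneg fun σ₀ _ => by positivity]
        exact sum_congr rfl fun σ₀ _ => hdist σ₀
    _ = .ofReal (ewensP θ n A) := by
        rw [ewensP, ewensE, sum_div, sum_filter]
        simp only [mul_ite, mul_one, mul_zero, ite_div, zero_div]

theorem ae_eventually_abs_sub_ewensE_le (hθ : 0 < θ) {Ω : Type*} [MeasurableSpace Ω]
    {μ : Measure Ω} {S : (N : ℕ) → Ω → Perm (Fin N)}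
    (hdist : ∀ N (σ₀ : Perm (Fin N)),
      μ {ω | S N ω = σ₀} = .ofReal (θ ^ cycleCount σ₀ / ∏ k ∈ range N, (θ + k)))
    (f : (N : ℕ) → Perm (Fin N) → ℝ) (hf : ∀ N, HammingLipschitz (f N)) {δ : ℝ} (hδ : 0 < δ) :
    ∀ᵐ ω ∂μ, ∀ᶠ N in atTop, |f N (S N ω) - ewensE θ N (f N)| ≤ δ * N := by
  have hsummable : Summable fun N : ℕ => 500 / (δ ^ 4 * (N : ℝ) ^ 2) := by
    refine ((Real.summable_one_div_nat_pow.2 one_lt_two).mul_left (500 / δ ^ 4)).congr fun N => ?_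
    rw [div_mul_div_comm, mul_one]
  have htail : ∑' N, μ (S N ⁻¹' {σ | δ * N < |f N σ - ewensE θ N (f N)|}) ≠ ∞ := by
    refine ne_top_of_le_ne_top ?_ (ENNReal.tsum_le_tsum fun N =>
      (measure_preimage_le_ofReal_ewensP hθ (hdist N) _).trans
        (ofReal_le_ofReal (ewensP_lt_abs_sub_le hθ (hf N) hδ)))
    rw [← ofReal_tsum_of_nonneg (fun N => by positivity) hsummable]
    exact ofReal_ne_top
  filter_upwards [ae_eventually_notMem htail] with ω hω
  filter_upwards [hω] with N hN
  simpa using hN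

end Probability

theorem tendsto_sub_div_of_forall_eventually {a b : ℕ → ℝ}
    (h : ∀ k : ℕ, ∀ᶠ N in atTop, |a N - b N| ≤ 1 / (k + 1) * N) :
    Tendsto (fun N : ℕ => (a N - b N) / N) atTop (𝓝 0) := by
  refine Metric.tendsto_nhds.2 fun ε hε => ?_
  obtain ⟨k, hk⟩ := exists_nat_one_div_lt hε
  filter_upwards [h k, eventually_ge_atTop 1] with N hN hN₁
  have hNpos : (0 : ℝ) < N := by exact_mod_cast hN₁
  rw [Real.dist_eq, sub_zero, abs_div, Nat.abs_cast, div_lt_iff₀ hNpos]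
  nlinarith

theorem tendsto_Fex_of_forall_eventually {θ : ℝ} (hθ : 0 < θ) {x : ℝ} (hx₀ : 0 ≤ x)
    (hx₁ : x ≤ 1) (σ : (N : ℕ) → Equiv.Perm (Fin N))
    (h : ∀ k : ℕ, ∀ᶠ N in atTop, |(countExc (σ N) ⌊(N : ℝ) * x⌋₊ : ℝ)
      - ewensE θ N (fun τ => (countExc τ ⌊(N : ℝ) * x⌋₊ : ℝ))| ≤ 1 / (k + 1) * N) :
    Tendsto (fun N => Fex (σ N) x) atTop (𝓝 ((1 - (1 - x) ^ 2) / 2)) := by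
  have hinterp : Tendsto (fun N => Fex (σ N) x - countExc (σ N) ⌊(N : ℝ) * x⌋₊ / N) atTop (𝓝 0) :=
    squeeze_zero_norm (fun N => abs_Fex_sub_countExc_div_le (σ N) hx₀)
      tendsto_one_div_atTop_nhds_zero_nat
  have hsum := (hinterp.add (tendsto_sub_div_of_forall_eventually h)).add
    (tendsto_ewensE_countExc_div hθ hx₀ hx₁)
  rw [zero_add, zero_add, show x - x ^ 2 / 2 = (1 - (1 - x) ^ 2) / 2 by ring] at hsum
  exact hsum.congr fun N => by ring

theorem Fex_as_convergence_general (θ : ℝ) (hθ : 0 < θ) (x : ℝ) (hx : x ∈ Set.Icc (0 : ℝ) 1)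
    {Ω : Type} [MeasurableSpace Ω] (μ : MeasureTheory.Measure Ω)
    (S : (N : ℕ) → Ω → Equiv.Perm (Fin N))
    (hdist : ∀ (N : ℕ) (σ0 : Equiv.Perm (Fin N)),
      μ {ω | S N ω = σ0} =
        ENNReal.ofReal (θ ^ cycleCount σ0 / ∏ k ∈ Finset.range N, (θ + (k : ℝ)))) :
    ∀ᵐ ω ∂μ, Filter.Tendsto (fun N => Fex (S N ω) x) Filter.atTop
      (nhds ((1 - (1 - x) ^ 2) / 2)) := by
  have hconc : ∀ k : ℕ, ∀ᵐ ω ∂μ, ∀ᶠ N in atTop,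
      |(countExc (S N ω) ⌊(N : ℝ) * x⌋₊ : ℝ)
        - ewensE θ N (fun τ => (countExc τ ⌊(N : ℝ) * x⌋₊ : ℝ))| ≤ 1 / (k + 1) * N :=
    fun k => ae_eventually_abs_sub_ewensE_le hθ hdist _ (fun _ => hammingLipschitz_countExc _)
      (by positivity)
  filter_upwards [ae_all_iff.2 hconc] with ω hω
  exact tendsto_Fex_of_forall_eventually hθ hx.1 hx.2 (fun N => S N ω) hω

/-- Theorem 1.2, first part: for independent Ewens(θ) random permutations `σ_N` on a common
probability space, almost surely `F^{(N)}_{σ_N}(x) → (1 − (1−x)²)/2`. -/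
theorem Fex_as_convergence (θ : ℝ) (hθ : 0 < θ) (x : ℝ) (hx : x ∈ Set.Icc (0 : ℝ) 1)
    {Ω : Type} [MeasurableSpace Ω] (μ : MeasureTheory.Measure Ω)
    [MeasureTheory.IsProbabilityMeasure μ]
    (S : (N : ℕ) → Ω → Equiv.Perm (Fin N))
    (hdist : ∀ (N : ℕ) (σ0 : Equiv.Perm (Fin N)),
      μ {ω | S N ω = σ0} =
        ENNReal.ofReal (θ ^ cycleCount σ0 / ∏ k ∈ Finset.range N, (θ + (k : ℝ))))
    (hindep : ProbabilityTheory.iIndepFun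
      (m := fun N => (⊤ : MeasurableSpace (Equiv.Perm (Fin N)))) S μ) :
    ∀ᵐ ω ∂μ, Filter.Tendsto (fun N => Fex (S N ω) x) Filter.atTop
      (nhds ((1 - (1 - x) ^ 2) / 2)) :=
  Fex_as_convergence_general θ hθ x hx μ S hdist

end
end

section
/- Let A^{(N)}_1, …, A^{(N)}_ℓ be ℓ sequences of (possibly complex-valued) random variables such that E[A^{(N)}_j] = 1 for all N and j, and such that all joint moments M^{(N)}_{A,Δ} = E[∏_{j∈Δ} A^{(N)}_j] are nonzero. For each Δ ⊆ [ℓ], define U^{(N)}_{A,Δ} as the unique family satisfying ∏_{δ ⊆ Δ} U^{(N)}_{A,δ} = M^{(N)}_{A,Δ} for all Δ ⊆ [ℓ], and let κ^{(N)}_{A,Δ} be the joint cumulant of the family (A^{(N)}_j)_{j∈Δ}. Then the following are equivalent: (I) for every Δ ⊆ [ℓ] with |Δ| ≥ 2, U^{(N)}_{A,Δ} = 1 + O(N^{−|Δ|+1}) as N → ∞; (II) for every Δ ⊆ [ℓ] with |Δ| ≥ 2, κ^{(N)}_{A,Δ} = O(N^{−|Δ|+1}) as N → ∞. -/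
/-!
Write `U_δ = 1 + u_δ`; then `M_Δ = ∏_{δ ⊆ Δ} (1 + u_δ)`, and `u_δ = 0` when `#δ ≤ 1` because
`E[A_j] = 1`. Expanding the products in the cumulant formula and exchanging sums, the Möbius
identity `∑_{π ≥ ρ} (-1)^(#π-1) (#π-1)! = [ρ has one block]` of the partition lattice gives
`κ_Δ = ∑_F ∏_{δ ∈ F} u_δ`, over the families `F` of nonempty subsets of `Δ` that connect `Δ`.
A connecting family has `∑_{δ ∈ F} (#δ - 1) ≥ #Δ - 1` (contract one member to a point), so (I)
bounds every term by `O(N^(1-#Δ))`. Conversely, the families containing `Δ` itself add up to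
`u_Δ ∏_{δ ⊊ Δ} U_δ = u_Δ (1 + o(1))`, and by induction on `#Δ` all other terms are
`O(N^(1-#Δ))`, whence (II) gives (I).
-/

open scoped BigOperators Classical
open Finset

noncomputable section

open Relation Filter Asymptotics Topology

variable {ι : Type*}

section SetPartitions

variable [DecidableEq ι] {S : Finset ι} {P : Finset (Finset ι)}

theorem mem_partitionsOf_iff :
    P ∈ partitionsOf S ↔
      (∀ C ∈ P, C.Nonempty) ∧ (P : Set (Finset ι)).PairwiseDisjoint id ∧ P.biUnion id = S := by
  simp only [partitionsOf, mem_filter, mem_powerset]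
  constructor
  · rintro ⟨hsub, hne, huniq⟩
    refine ⟨hne, fun C hC D hD hCD => disjoint_left.2 fun x hxC hxD => hCD ?_, ?_⟩
    · obtain ⟨E, -, hE⟩ := huniq x (mem_powerset.1 (hsub hC) hxC)
      rw [hE C ⟨hC, hxC⟩, hE D ⟨hD, hxD⟩]
    · ext x
      simp only [mem_biUnion, id]
      refine ⟨fun ⟨C, hC, hx⟩ => mem_powerset.1 (hsub hC) hx, fun hx => ?_⟩
      obtain ⟨C, hC, -⟩ := huniq x hx
      exact ⟨C, hC⟩
  · rintro ⟨hne, hdisj, rfl⟩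
    refine ⟨fun C hC => mem_powerset.2 (subset_biUnion_of_mem id hC), hne, fun x hx => ?_⟩
    obtain ⟨C, hC, hxC⟩ := mem_biUnion.1 hx
    refine ⟨C, ⟨hC, hxC⟩, fun D ⟨hD, hxD⟩ => ?_⟩
    by_contra hDC
    exact disjoint_left.1 (hdisj hD hC hDC) hxD hxC

theorem subset_of_mem_partitionsOf (hP : P ∈ partitionsOf S) {C : Finset ι} (hC : C ∈ P) :
    C ⊆ S :=
  (mem_partitionsOf_iff.1 hP).2.2 ▸ subset_biUnion_of_mem id hC

theorem nonempty_of_mem_partitionsOf (hP : P ∈ partitionsOf S) {C : Finset ι} (hC : C ∈ P) :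
    C.Nonempty :=
  (mem_partitionsOf_iff.1 hP).1 C hC

theorem exists_mem_of_mem_partitionsOf (hP : P ∈ partitionsOf S) {x : ι} (hx : x ∈ S) :
    ∃ C ∈ P, x ∈ C := by
  rw [← (mem_partitionsOf_iff.1 hP).2.2] at hx
  simpa using hx

theorem eq_of_mem_partitionsOf (hP : P ∈ partitionsOf S) {C D : Finset ι} (hC : C ∈ P)
    (hD : D ∈ P) {x : ι} (hxC : x ∈ C) (hxD : x ∈ D) : C = D := by
  by_contra hCD
  exact disjoint_left.1 ((mem_partitionsOf_iff.1 hP).2.1 hC hD hCD) hxC hxD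

theorem partition_nonempty_of_nonempty (hP : P ∈ partitionsOf S) (hS : S.Nonempty) :
    P.Nonempty := by
  obtain ⟨x, hx⟩ := hS
  obtain ⟨C, hC, -⟩ := exists_mem_of_mem_partitionsOf hP hx
  exact ⟨C, hC⟩

theorem erase_mem_partitionsOf (hP : P ∈ partitionsOf S) {C : Finset ι} (hC : C ∈ P) :
    P.erase C ∈ partitionsOf (S \ C) := by
  obtain ⟨hne, hdisj, hS⟩ := mem_partitionsOf_iff.1 hP
  refine mem_partitionsOf_iff.2 ⟨fun D hD => hne D (mem_of_mem_erase hD),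
    hdisj.subset (by simp), ?_⟩
  ext x
  rw [← hS]
  simp only [mem_biUnion, mem_erase, id, Finset.mem_sdiff]
  constructor
  · rintro ⟨D, ⟨hDC, hD⟩, hxD⟩
    exact ⟨⟨D, hD, hxD⟩, fun hxC => hDC (eq_of_mem_partitionsOf hP hD hC hxD hxC)⟩
  · rintro ⟨⟨D, hD, hxD⟩, hxC⟩
    exact ⟨D, ⟨fun h => hxC (h ▸ hxD), hD⟩, hxD⟩

theorem insert_mem_partitionsOf (hP : P ∈ partitionsOf S) {D : Finset ι} (hD : D.Nonempty)
    (hDS : Disjoint D S) : insert D P ∈ partitionsOf (D ∪ S) := by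
  obtain ⟨hne, hdisj, hS⟩ := mem_partitionsOf_iff.1 hP
  refine mem_partitionsOf_iff.2 ⟨?_, ?_, by rw [biUnion_insert, hS, id]⟩
  · simpa [hD] using hne
  · rw [coe_insert]
    refine hdisj.insert fun C hC _ => ?_
    exact hDS.mono_right (subset_of_mem_partitionsOf hP hC)

theorem eq_singleton_of_subset_mem_partitionsOf (hP : P ∈ partitionsOf S) {C : Finset ι}
    (hC : C ∈ P) (hSC : S ⊆ C) : P = {S} := by
  have hCS : C = S := (subset_of_mem_partitionsOf hP hC).antisymm hSC
  subst hCS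
  refine eq_singleton_iff_unique_mem.2 ⟨hC, fun D hD => ?_⟩
  obtain ⟨x, hx⟩ := nonempty_of_mem_partitionsOf hP hD
  exact eq_of_mem_partitionsOf hP hD hC hx (subset_of_mem_partitionsOf hP hD hx)

theorem singleton_mem_partitionsOf (hS : S.Nonempty) : {S} ∈ partitionsOf S := by
  simpa using insert_mem_partitionsOf (mem_partitionsOf_iff.2 (by simp) : ∅ ∈ partitionsOf ∅)
    hS (disjoint_empty_right S)

end SetPartitions

section Coarsenings

variable [DecidableEq ι]

def Refines (ρ π : Finset (Finset ι)) : Prop :=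
  ∀ B ∈ ρ, ∃ C ∈ π, B ⊆ C

def coarsenings (S : Finset ι) (ρ : Finset (Finset ι)) : Finset (Finset (Finset ι)) :=
  (partitionsOf S).filter (Refines ρ)

variable {S B : Finset ι} {P ρ : Finset (Finset ι)}

theorem mem_coarsenings {π : Finset (Finset ι)} :
    π ∈ coarsenings S ρ ↔ π ∈ partitionsOf S ∧ Refines ρ π :=
  mem_filter

theorem notMem_partitionsOf_of_disjoint (hP : P ∈ partitionsOf S) (hB : B.Nonempty)
    (hSB : Disjoint S B) : B ∉ P := fun hBP =>
  hB.ne_empty (disjoint_self.1 (hSB.mono_left (subset_of_mem_partitionsOf hP hBP)))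

theorem insert_union_erase_mem_partitionsOf (hP : P ∈ partitionsOf S) {C : Finset ι}
    (hC : C ∈ P) (hSB : Disjoint S B) : insert (C ∪ B) (P.erase C) ∈ partitionsOf (S ∪ B) := by
  have hCS := subset_of_mem_partitionsOf hP hC
  have h := insert_mem_partitionsOf (erase_mem_partitionsOf hP hC)
    ((nonempty_of_mem_partitionsOf hP hC).mono subset_union_left)
    (disjoint_union_left.2 ⟨disjoint_sdiff, (hSB.mono_left sdiff_subset).symm⟩)
  rwa [union_assoc, union_comm B, ← union_assoc, union_sdiff_of_subset hCS] at h

theorem insert_sdiff_erase_mem_partitionsOf (hP : P ∈ partitionsOf (S ∪ B)) {T : Finset ι}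
    (hT : T ∈ P) (hBT : B ⊆ T) (hTB : T ≠ B) (hSB : Disjoint S B) :
    insert (T \ B) (P.erase T) ∈ partitionsOf S := by
  have hTS := subset_of_mem_partitionsOf hP hT
  have h := insert_mem_partitionsOf (erase_mem_partitionsOf hP hT)
    (sdiff_nonempty.2 fun h => hTB (h.antisymm hBT)) (disjoint_sdiff.mono_left sdiff_subset)
  convert h using 2
  ext x
  have := @hTS x
  have := @hBT x
  have : x ∈ S → x ∉ B := fun h => disjoint_left.1 hSB h
  simp only [Finset.mem_union, Finset.mem_sdiff] at *
  tauto

theorem sum_coarsenings_insert_filter_mem {β : Type*} [AddCommMonoid β]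
    (hρ : ρ ∈ partitionsOf S) (hB : B.Nonempty) (hSB : Disjoint S B) (f : ℕ → β) :
    ∑ π ∈ (coarsenings (S ∪ B) (insert B ρ)).filter (B ∈ ·), f #π =
      ∑ π ∈ coarsenings S ρ, f (#π + 1) := by
  refine sum_nbij' (·.erase B) (insert B ·) (fun π hπ => ?_) (fun π hπ => ?_)
    (fun π hπ => insert_erase (mem_filter.1 hπ).2) (fun π hπ => ?_)
    (fun π hπ => by rw [card_erase_add_one (mem_filter.1 hπ).2])
  · obtain ⟨⟨hπ, href⟩, hBπ⟩ := by simpa only [mem_filter, mem_coarsenings] using hπ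
    refine mem_coarsenings.2 ⟨?_, fun B' hB' => ?_⟩
    · simpa [union_sdiff_cancel_right hSB] using erase_mem_partitionsOf hπ hBπ
    obtain ⟨C, hC, hB'C⟩ := href B' (mem_insert_of_mem hB')
    refine ⟨C, mem_erase.2 ⟨?_, hC⟩, hB'C⟩
    rintro rfl
    obtain ⟨x, hx⟩ := nonempty_of_mem_partitionsOf hρ hB'
    exact disjoint_left.1 hSB (subset_of_mem_partitionsOf hρ hB' hx) (hB'C hx)
  · obtain ⟨hπ, href⟩ := mem_coarsenings.1 hπ
    refine mem_filter.2 ⟨mem_coarsenings.2 ⟨?_, fun B' hB' => ?_⟩, mem_insert_self _ _⟩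
    · rw [union_comm]
      exact insert_mem_partitionsOf hπ hB hSB.symm
    rcases mem_insert.1 hB' with rfl | hB'
    · exact ⟨B', mem_insert_self _ _, subset_rfl⟩
    · obtain ⟨C, hC, hB'C⟩ := href B' hB'
      exact ⟨C, mem_insert_of_mem hC, hB'C⟩
  · exact erase_insert (notMem_partitionsOf_of_disjoint (mem_coarsenings.1 hπ).1 hB hSB)

theorem union_notMem_erase (hP : P ∈ partitionsOf S) {C : Finset ι} (hC : C ∈ P) :
    C ∪ B ∉ P.erase C := fun h => by
  obtain ⟨x, hx⟩ := nonempty_of_mem_partitionsOf hP hC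
  exact (ne_of_mem_erase h)
    (eq_of_mem_partitionsOf hP (mem_of_mem_erase h) hC (mem_union_left B hx) hx)

theorem insert_union_erase_mem_coarsenings {π : Finset (Finset ι)} (hπ : π ∈ coarsenings S ρ)
    {C : Finset ι} (hC : C ∈ π) (hB : B.Nonempty) (hSB : Disjoint S B) :
    insert (C ∪ B) (π.erase C) ∈ (coarsenings (S ∪ B) (insert B ρ)).filter (B ∉ ·) := by
  obtain ⟨hπ, href⟩ := mem_coarsenings.1 hπ
  refine mem_filter.2 ⟨mem_coarsenings.2 ⟨insert_union_erase_mem_partitionsOf hπ hC hSB,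
    fun B' hB' => ?_⟩, ?_⟩
  · rcases mem_insert.1 hB' with rfl | hB'
    · exact ⟨C ∪ B', mem_insert_self _ _, subset_union_right⟩
    obtain ⟨D, hD, hB'D⟩ := href B' hB'
    by_cases hDC : D = C
    · exact ⟨C ∪ B, mem_insert_self _ _, (hDC ▸ hB'D).trans subset_union_left⟩
    · exact ⟨D, mem_insert_of_mem (mem_erase.2 ⟨hDC, hD⟩), hB'D⟩
  · rw [mem_insert, not_or]
    refine ⟨fun h => ?_, fun h => notMem_partitionsOf_of_disjoint hπ hB hSB (mem_of_mem_erase h)⟩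
    obtain ⟨x, hx⟩ := nonempty_of_mem_partitionsOf hπ hC
    exact disjoint_left.1 hSB (subset_of_mem_partitionsOf hπ hC hx) (h ▸ mem_union_left B hx)

theorem insert_union_erase_inj {π₁ π₂ : Finset (Finset ι)} {C₁ C₂ : Finset ι}
    (hπ₁ : π₁ ∈ partitionsOf S) (hC₁ : C₁ ∈ π₁) (hπ₂ : π₂ ∈ partitionsOf S) (hC₂ : C₂ ∈ π₂)
    (hB : B.Nonempty) (hSB : Disjoint S B)
    (h : insert (C₁ ∪ B) (π₁.erase C₁) = insert (C₂ ∪ B) (π₂.erase C₂)) :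
    π₁ = π₂ ∧ C₁ = C₂ := by
  obtain ⟨b, hb⟩ := hB
  have hCB : C₁ ∪ B = C₂ ∪ B :=
    eq_of_mem_partitionsOf (insert_union_erase_mem_partitionsOf hπ₁ hC₁ hSB)
      (mem_insert_self _ _) (h ▸ mem_insert_self _ _) (mem_union_right _ hb) (mem_union_right _ hb)
  obtain rfl : C₁ = C₂ := by
    rw [← union_sdiff_cancel_right (hSB.mono_left (subset_of_mem_partitionsOf hπ₁ hC₁)), hCB,
      union_sdiff_cancel_right (hSB.mono_left (subset_of_mem_partitionsOf hπ₂ hC₂))]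
  have herase : π₁.erase C₁ = π₂.erase C₁ := by
    rw [← erase_insert (union_notMem_erase hπ₁ hC₁ (B := B)), h,
      erase_insert (union_notMem_erase hπ₂ hC₂)]
  exact ⟨by rw [← insert_erase hC₁, herase, insert_erase hC₂], rfl⟩

theorem exists_insert_union_erase_eq (hρ : ρ ∈ partitionsOf S) (hSB : Disjoint S B)
    {π : Finset (Finset ι)} (hπ : π ∈ (coarsenings (S ∪ B) (insert B ρ)).filter (B ∉ ·)) :
    ∃ π' ∈ coarsenings S ρ, ∃ C ∈ π', insert (C ∪ B) (π'.erase C) = π := by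
  obtain ⟨⟨hπ, href⟩, hBπ⟩ := by simpa only [mem_filter, mem_coarsenings] using hπ
  obtain ⟨T, hT, hBT⟩ := href B (mem_insert_self _ _)
  have hsplit := insert_sdiff_erase_mem_partitionsOf hπ hT hBT (fun h => hBπ (h ▸ hT)) hSB
  have hnot : T \ B ∉ π.erase T := fun h => by
    obtain ⟨y, hy⟩ := nonempty_of_mem_partitionsOf hsplit (mem_insert_self _ _)
    exact (ne_of_mem_erase h)
      (eq_of_mem_partitionsOf hπ (mem_of_mem_erase h) hT hy (sdiff_subset hy))
  refine ⟨insert (T \ B) (π.erase T), mem_coarsenings.2 ⟨hsplit, fun B' hB' => ?_⟩,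
    T \ B, mem_insert_self _ _, ?_⟩
  · obtain ⟨D, hD, hB'D⟩ := href B' (mem_insert_of_mem hB')
    by_cases hDT : D = T
    · subst hDT
      refine ⟨D \ B, mem_insert_self _ _, fun y hy => Finset.mem_sdiff.2 ⟨hB'D hy, ?_⟩⟩
      exact disjoint_left.1 hSB (subset_of_mem_partitionsOf hρ hB' hy)
    · exact ⟨D, mem_insert_of_mem (mem_erase.2 ⟨hDT, hD⟩), hB'D⟩
  · rw [erase_insert hnot, sdiff_union_of_subset hBT, insert_erase hT]

theorem sum_coarsenings_insert_filter_notMem {β : Type*} [AddCommMonoid β]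
    (hρ : ρ ∈ partitionsOf S) (hB : B.Nonempty) (hSB : Disjoint S B) (f : ℕ → β) :
    ∑ π ∈ (coarsenings (S ∪ B) (insert B ρ)).filter (B ∉ ·), f #π =
      ∑ π ∈ coarsenings S ρ, #π • f #π := by
  calc _ = ∑ x ∈ (coarsenings S ρ).sigma id, f #x.1 := ?_
    _ = ∑ π ∈ coarsenings S ρ, ∑ _C ∈ π, f #π := (sum_sigma' _ _ (fun π _ => f #π)).symm
    _ = _ := by simp only [sum_const]
  symm
  refine sum_bij (fun x _ => insert (x.2 ∪ B) (x.1.erase x.2))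
    (fun x hx => insert_union_erase_mem_coarsenings (mem_sigma.1 hx).1 (mem_sigma.1 hx).2 hB hSB)
    ?_ ?_ fun x hx => ?_
  · rintro ⟨π₁, C₁⟩ hx₁ ⟨π₂, C₂⟩ hx₂ h
    obtain ⟨hπ₁, hC₁⟩ := mem_sigma.1 hx₁
    obtain ⟨hπ₂, hC₂⟩ := mem_sigma.1 hx₂
    obtain ⟨rfl, rfl⟩ := insert_union_erase_inj (mem_coarsenings.1 hπ₁).1 hC₁
      (mem_coarsenings.1 hπ₂).1 hC₂ hB hSB h
    rfl
  · intro π hπ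
    obtain ⟨π', hπ', C, hC, rfl⟩ := exists_insert_union_erase_eq hρ hSB hπ
    exact ⟨⟨π', C⟩, mem_sigma.2 ⟨hπ', hC⟩, rfl⟩
  · obtain ⟨hπ, hC : x.2 ∈ x.1⟩ := mem_sigma.1 hx
    rw [card_insert_of_notMem (union_notMem_erase (mem_coarsenings.1 hπ).1 hC),
      card_erase_add_one hC]

theorem sum_coarsenings_insert {β : Type*} [AddCommMonoid β]
    (hρ : ρ ∈ partitionsOf S) (hB : B.Nonempty) (hSB : Disjoint S B) (f : ℕ → β) :
    ∑ π ∈ coarsenings (S ∪ B) (insert B ρ), f #π =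
      ∑ π ∈ coarsenings S ρ, (f (#π + 1) + #π • f #π) := by
  rw [← sum_filter_add_sum_filter_not _ (B ∈ ·), sum_add_distrib,
    sum_coarsenings_insert_filter_mem hρ hB hSB, sum_coarsenings_insert_filter_notMem hρ hB hSB]

end Coarsenings

section CumulantCoefficients

def cumulantCoeff (𝕜 : Type*) [CommRing 𝕜] (k : ℕ) : 𝕜 :=
  (-1) ^ (k - 1) * ((k - 1).factorial : 𝕜)

theorem cumulantCoeff_succ_add_nsmul {𝕜 : Type*} [CommRing 𝕜] {k : ℕ} (hk : 1 ≤ k) :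
    cumulantCoeff 𝕜 (k + 1) + k • cumulantCoeff 𝕜 k = 0 := by
  obtain ⟨m, rfl⟩ := Nat.exists_eq_add_of_le' hk
  simp only [cumulantCoeff, Nat.add_sub_cancel, Nat.factorial_succ, nsmul_eq_mul, pow_succ]
  push_cast
  ring

variable {𝕜 : Type*} [Field 𝕜] [DecidableEq ι]

theorem cumulantOn_eq_sum (S : Finset ι) (M : Finset ι → 𝕜) :
    cumulantOn S M = ∑ P ∈ partitionsOf S, cumulantCoeff 𝕜 #P * ∏ C ∈ P, M C :=
  rfl

theorem sum_coarsenings_cumulantCoeff {S : Finset ι} {ρ : Finset (Finset ι)}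
    (hρ : ρ ∈ partitionsOf S) (hS : S.Nonempty) :
    ∑ π ∈ coarsenings S ρ, cumulantCoeff 𝕜 #π = if #ρ = 1 then 1 else 0 := by
  obtain ⟨B, hB⟩ := partition_nonempty_of_nonempty hρ hS
  split_ifs with hρ1
  · obtain ⟨B, rfl⟩ := card_eq_one.1 hρ1
    obtain rfl : B = S := by simpa using (mem_partitionsOf_iff.1 hρ).2.2
    have : coarsenings B {B} = {{B}} := by
      ext π
      simp only [mem_coarsenings, Refines, mem_singleton, forall_eq]
      constructor
      · rintro ⟨hπ, C, hC, hBC⟩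
        exact eq_singleton_of_subset_mem_partitionsOf hπ hC hBC
      · rintro rfl
        exact ⟨singleton_mem_partitionsOf hS, B, mem_singleton_self B, subset_rfl⟩
    simp [this, cumulantCoeff]
  · have hρ' := erase_mem_partitionsOf hρ hB
    have hS' : (S \ B).Nonempty := by
      obtain ⟨C, hC⟩ : (ρ.erase B).Nonempty := by
        rw [← card_pos, card_erase_of_mem hB]
        have := card_pos.2 ⟨B, hB⟩
        omega
      exact (nonempty_of_mem_partitionsOf hρ' hC).mono (subset_of_mem_partitionsOf hρ' hC)
    rw [← sdiff_union_of_subset (subset_of_mem_partitionsOf hρ hB), ← insert_erase hB,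
      sum_coarsenings_insert hρ' (nonempty_of_mem_partitionsOf hρ hB) sdiff_disjoint]
    exact sum_eq_zero fun π hπ => cumulantCoeff_succ_add_nsmul
      (card_pos.2 (partition_nonempty_of_nonempty (mem_coarsenings.1 hπ).1 hS'))

end CumulantCoefficients

section Connectivity

def Linked (F : Finset (Finset ι)) (x y : ι) : Prop :=
  ∃ δ ∈ F, x ∈ δ ∧ y ∈ δ

def Connects (S : Finset ι) (F : Finset (Finset ι)) : Prop :=
  ∀ x ∈ S, ∀ y ∈ S, EqvGen (Linked F) x y

variable {F : Finset (Finset ι)}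

theorem connects_of_mem {S : Finset ι} (hSF : S ∈ F) : Connects S F :=
  fun _ hx _ hy => .rel _ _ ⟨S, hSF, hx, hy⟩

def component (S : Finset ι) (F : Finset (Finset ι)) (x : ι) : Finset ι :=
  S.filter (EqvGen (Linked F) x)

variable {S : Finset ι}

theorem mem_component {x y : ι} : y ∈ component S F x ↔ y ∈ S ∧ EqvGen (Linked F) x y :=
  mem_filter

theorem component_eq_of_eqvGen {x y : ι} (h : EqvGen (Linked F) x y) :
    component S F x = component S F y := by
  ext z
  simp only [mem_component]
  exact and_congr_right fun _ => ⟨(h.symm _ _).trans _ _ _, h.trans _ _ _⟩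

variable [DecidableEq ι]

def components (S : Finset ι) (F : Finset (Finset ι)) : Finset (Finset ι) :=
  S.image (component S F)

theorem components_mem_partitionsOf : components S F ∈ partitionsOf S := by
  refine mem_partitionsOf_iff.2 ⟨?_, fun C hC D hD hCD => ?_, ?_⟩
  · intro C hC
    obtain ⟨x, hx, rfl⟩ := mem_image.1 hC
    exact ⟨x, mem_component.2 ⟨hx, .refl x⟩⟩
  · simp only [components, coe_image, Set.mem_image, mem_coe] at hC hD
    obtain ⟨x, -, rfl⟩ := hC
    obtain ⟨y, -, rfl⟩ := hD
    refine disjoint_left.2 fun z hzx hzy => hCD (component_eq_of_eqvGen ?_)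
    exact (mem_component.1 hzx).2.trans _ _ _ ((mem_component.1 hzy).2.symm _ _)
  · ext x
    simp only [components, mem_biUnion, mem_image, id]
    constructor
    · rintro ⟨_, ⟨y, -, rfl⟩, hx⟩
      exact (mem_component.1 hx).1
    · exact fun hx => ⟨_, ⟨x, hx, rfl⟩, mem_component.2 ⟨hx, .refl x⟩⟩

theorem refines_components_iff (hF : F ⊆ S.powerset.erase ∅) {π : Finset (Finset ι)}
    (hπ : π ∈ partitionsOf S) : Refines (components S F) π ↔ Refines F π := by
  constructor
  · intro h δ hδ
    obtain ⟨hδne, hδS⟩ := by simpa only [mem_erase, mem_powerset] using hF hδ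
    obtain ⟨x, hx⟩ := nonempty_iff_ne_empty.2 hδne
    obtain ⟨C, hC, hxC⟩ := h _ (mem_image_of_mem _ (hδS hx))
    exact ⟨C, hC, fun y hy => hxC (mem_component.2 ⟨hδS hy, .rel _ _ ⟨δ, hδ, hx, hy⟩⟩)⟩
  · rintro h _ hB
    obtain ⟨x, hx, rfl⟩ := mem_image.1 hB
    obtain ⟨C, hC, hxC⟩ := exists_mem_of_mem_partitionsOf hπ hx
    have hequiv : Equivalence fun a b : ι => ∀ D ∈ π, a ∈ D ↔ b ∈ D :=
      ⟨fun _ _ _ => Iff.rfl, fun h D hD => (h D hD).symm,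
        fun h₁ h₂ D hD => (h₁ D hD).trans (h₂ D hD)⟩
    have hblock : ∀ a b, Linked F a b → ∀ D ∈ π, a ∈ D ↔ b ∈ D := by
      rintro a b ⟨δ, hδ, ha, hb⟩ D hD
      obtain ⟨E, hE, hδE⟩ := h δ hδ
      have hiff : ∀ z ∈ δ, z ∈ D ↔ D = E := fun z hz =>
        ⟨fun hzD => eq_of_mem_partitionsOf hπ hD hE hzD (hδE hz), fun hDE => hDE ▸ hδE hz⟩
      rw [hiff a ha, hiff b hb]
    refine ⟨C, hC, fun y hy => ?_⟩
    exact (hequiv.eqvGen_iff.1 ((mem_component.1 hy).2.mono hblock) C hC).1 hxC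

theorem card_components_eq_one_iff (hS : S.Nonempty) :
    #(components S F) = 1 ↔ Connects S F := by
  constructor
  · intro h x hx y hy
    obtain ⟨C, hC⟩ := card_eq_one.1 h
    have hxy : component S F x = component S F y := by
      have hx' := mem_image_of_mem (component S F) hx
      have hy' := mem_image_of_mem (component S F) hy
      rw [components] at hC
      rw [hC, mem_singleton] at hx' hy'
      rw [hx', hy']
    exact (mem_component.1 (hxy ▸ mem_component.2 ⟨hy, .refl y⟩)).2
  · intro h
    rw [card_eq_one]
    refine ⟨S, ?_⟩
    rw [components, image_congr (g := fun _ => S), image_const hS]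
    intro x hx
    ext y
    simp only [mem_component]
    exact ⟨And.left, fun hy => ⟨hy, h x hx y hy⟩⟩

theorem sum_coarsenings_cumulantCoeff_eq_ite {𝕜 : Type*} [Field 𝕜] (hS : S.Nonempty)
    (hF : F ⊆ S.powerset.erase ∅) :
    ∑ π ∈ coarsenings S F, cumulantCoeff 𝕜 #π = if Connects S F then 1 else 0 := by
  have : coarsenings S F = coarsenings S (components S F) :=
    filter_congr fun π hπ => (refines_components_iff hF hπ).symm
  rw [this, sum_coarsenings_cumulantCoeff components_mem_partitionsOf hS]
  exact if_congr (card_components_eq_one_iff hS) rfl rfl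

def collapse (δ₀ : Finset ι) (c x : ι) : ι :=
  if x ∈ δ₀ then c else x

theorem image_collapse_eq_insert_sdiff {δ₀ : Finset ι} {c : ι} (hc : c ∈ δ₀) (hδ₀S : δ₀ ⊆ S) :
    S.image (collapse δ₀ c) = insert c (S \ δ₀) := by
  ext y
  simp only [mem_image, mem_insert, Finset.mem_sdiff, collapse]
  constructor
  · rintro ⟨x, hx, rfl⟩
    by_cases hxδ : x ∈ δ₀ <;> simp [hxδ, hx]
  · rintro (rfl | ⟨hy, hyδ⟩)
    · exact ⟨y, hδ₀S hc, by simp⟩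
    · exact ⟨y, hy, by simp [hyδ]⟩

theorem Connects.image_collapse (hconn : Connects S F) (δ₀ : Finset ι) (c : ι) :
    Connects (S.image (collapse δ₀ c)) ((F.erase δ₀).image (image (collapse δ₀ c))) := by
  simp only [Connects, mem_image, forall_exists_index, and_imp, forall_apply_eq_imp_iff₂]
  intro x hx y hy
  refine (InvImage.equivalence _ _ (EqvGen.is_equivalence _)).eqvGen_iff.1
    ((hconn x hx y hy).mono ?_)
  rintro a b ⟨δ, hδ, ha, hb⟩
  by_cases hδδ₀ : δ = δ₀
  · subst hδδ₀
    simp only [InvImage, collapse, ha, hb, if_true]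
    exact .refl _
  · exact .rel _ _ ⟨δ.image (collapse δ₀ c), mem_image_of_mem _ (mem_erase.2 ⟨hδδ₀, hδ⟩),
      mem_image_of_mem _ ha, mem_image_of_mem _ hb⟩

theorem Connects.card_le_sum_card_sub_one (hconn : Connects S F) (hF : F ⊆ S.powerset.erase ∅) :
    #S ≤ ∑ δ ∈ F, (#δ - 1) + 1 := by
  obtain ⟨n, hn⟩ : ∃ n, #F = n := ⟨_, rfl⟩
  induction n using Nat.strong_induction_on generalizing S F with
  | _ n ih =>
  rcases F.eq_empty_or_nonempty with rfl | ⟨δ₀, hδ₀⟩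
  · refine (card_le_one.2 fun x hx y hy => ?_).trans (by simp)
    exact eq_equivalence.eqvGen_iff.1
      ((hconn x hx y hy).mono fun _ _ ⟨δ, hδ, _⟩ => absurd hδ (notMem_empty δ))
  obtain ⟨hδ₀ne, hδ₀S⟩ := by simpa only [mem_erase, mem_powerset] using hF hδ₀
  obtain ⟨c, hc⟩ := nonempty_iff_ne_empty.2 hδ₀ne
  -- Collapsing `δ₀` to `c` lowers `#S` by `#δ₀ - 1` and keeps the other members connecting.
  have hF' : (F.erase δ₀).image (image (collapse δ₀ c)) ⊆
      (S.image (collapse δ₀ c)).powerset.erase ∅ := by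
    intro δ' hδ'
    obtain ⟨δ, hδ, rfl⟩ := mem_image.1 hδ'
    obtain ⟨hδne, hδS⟩ := by simpa only [mem_erase, mem_powerset] using hF (mem_of_mem_erase hδ)
    simp only [mem_erase, mem_powerset, ne_eq, image_eq_empty]
    exact ⟨hδne, image_subset_image hδS⟩
  have hsum : ∑ δ ∈ (F.erase δ₀).image (image (collapse δ₀ c)), (#δ - 1) ≤
      ∑ δ ∈ F.erase δ₀, (#δ - 1) :=
    (sum_image_le_of_nonneg fun _ _ => Nat.zero_le _).trans
      (sum_le_sum fun δ _ => Nat.sub_le_sub_right card_image_le 1)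
  have hcollapse := ih _ (card_image_le.trans_lt (hn ▸ card_erase_lt_of_mem hδ₀))
    (hconn.image_collapse δ₀ c) hF' rfl
  rw [image_collapse_eq_insert_sdiff hc hδ₀S, card_insert_of_notMem (by simp [hc])] at hcollapse
  have := card_sdiff_add_card_eq_card hδ₀S
  have := add_sum_erase F (fun δ => #δ - 1) hδ₀
  have := card_pos.2 (nonempty_iff_ne_empty.2 hδ₀ne)
  omega

end Connectivity

section CumulantExpansion

variable {𝕜 : Type*} [Field 𝕜] [DecidableEq ι] {S : Finset ι}

def connectedFamilies (S : Finset ι) : Finset (Finset (Finset ι)) :=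
  (S.powerset.erase ∅).powerset.filter (Connects S)

theorem prod_prod_powerset_eq_sum_refines {π : Finset (Finset ι)} (hπ : π ∈ partitionsOf S)
    (u : Finset ι → 𝕜) (hu : u ∅ = 0) :
    ∏ C ∈ π, ∏ δ ∈ C.powerset, (1 + u δ) =
      ∑ F ∈ (S.powerset.erase ∅).powerset with Refines F π, ∏ δ ∈ F, u δ := by
  have hdisj : (π : Set (Finset ι)).PairwiseDisjoint fun C => C.powerset.erase ∅ := by
    intro C hC D hD hCD
    refine disjoint_left.2 fun δ hδC hδD => ?_
    simp only [mem_erase, mem_powerset] at hδC hδD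
    obtain ⟨x, hx⟩ := nonempty_iff_ne_empty.2 hδC.1
    exact hCD (eq_of_mem_partitionsOf hπ hC hD (hδC.2 hx) (hδD.2 hx))
  have hfamilies : (π.biUnion fun C => C.powerset.erase ∅).powerset =
      (S.powerset.erase ∅).powerset.filter (Refines · π) := by
    ext F
    simp only [mem_powerset, mem_filter]
    constructor
    · intro h
      refine ⟨fun δ hδ => ?_, fun δ hδ => ?_⟩ <;>
        obtain ⟨C, hC, hδC⟩ := mem_biUnion.1 (h hδ) <;> rw [mem_erase, mem_powerset] at hδC
      · exact mem_erase.2 ⟨hδC.1, mem_powerset.2 (hδC.2.trans (subset_of_mem_partitionsOf hπ hC))⟩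
      · exact ⟨C, hC, hδC.2⟩
    · rintro ⟨hS, hπ⟩ δ hδ
      obtain ⟨C, hC, hδC⟩ := hπ δ hδ
      exact mem_biUnion.2 ⟨C, hC, mem_erase.2 ⟨(mem_erase.1 (hS hδ)).1, mem_powerset.2 hδC⟩⟩
  calc ∏ C ∈ π, ∏ δ ∈ C.powerset, (1 + u δ)
      = ∏ C ∈ π, ∏ δ ∈ C.powerset.erase ∅, (1 + u δ) := prod_congr rfl fun C _ => by
        rw [← mul_prod_erase _ _ (empty_mem_powerset C), hu, add_zero, one_mul]
    _ = _ := by rw [← prod_biUnion hdisj, prod_one_add, hfamilies]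

theorem cumulantOn_prod_powerset (hS : S.Nonempty) (u : Finset ι → 𝕜) (hu : u ∅ = 0) :
    cumulantOn S (fun Δ => ∏ δ ∈ Δ.powerset, (1 + u δ)) =
      ∑ F ∈ connectedFamilies S, ∏ δ ∈ F, u δ := by
  calc cumulantOn S (fun Δ => ∏ δ ∈ Δ.powerset, (1 + u δ))
      = ∑ π ∈ partitionsOf S, ∑ F ∈ (S.powerset.erase ∅).powerset,
          if Refines F π then cumulantCoeff 𝕜 #π * ∏ δ ∈ F, u δ else 0 := by
        rw [cumulantOn_eq_sum]
        refine sum_congr rfl fun π hπ => ?_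
        rw [prod_prod_powerset_eq_sum_refines hπ u hu, mul_sum, sum_filter]
    _ = ∑ F ∈ (S.powerset.erase ∅).powerset,
          (∑ π ∈ coarsenings S F, cumulantCoeff 𝕜 #π) * ∏ δ ∈ F, u δ := by
        rw [sum_comm]
        simp only [coarsenings, sum_filter, sum_mul, ite_mul, zero_mul]
    _ = ∑ F ∈ connectedFamilies S, ∏ δ ∈ F, u δ := by
        rw [connectedFamilies, sum_filter]
        refine sum_congr rfl fun F hF => ?_
        rw [sum_coarsenings_cumulantCoeff_eq_ite hS (mem_powerset.1 hF), ite_mul, one_mul,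
          zero_mul]

theorem sum_connectedFamilies_prod (hS : S.Nonempty) (u : Finset ι → 𝕜) :
    ∑ F ∈ connectedFamilies S, ∏ δ ∈ F, u δ =
      u S * ∏ δ ∈ (S.powerset.erase ∅).erase S, (1 + u δ) +
        ∑ F ∈ ((S.powerset.erase ∅).erase S).powerset with Connects S F, ∏ δ ∈ F, u δ := by
  rw [connectedFamilies, sum_filter, sum_filter]
  set W := S.powerset.erase ∅
  have hW : W = insert S (W.erase S) :=
    (insert_erase (mem_erase.2 ⟨hS.ne_empty, mem_powerset_self S⟩)).symm
  conv_lhs => rw [hW]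
  rw [sum_powerset_insert (notMem_erase S W), add_comm, prod_one_add, mul_sum]
  congr 1
  refine sum_congr rfl fun F hF => ?_
  rw [if_pos (connects_of_mem (mem_insert_self S F)),
    prod_insert fun h => notMem_erase S W (mem_powerset.1 hF h)]

end CumulantExpansion

theorem Filter.Tendsto.eventually_norm_le_one {α E : Type*} [SeminormedAddCommGroup E]
    {l : Filter α} {f : α → E} (hf : Tendsto f l (𝓝 0)) : ∀ᶠ a in l, ‖f a‖ ≤ 1 := by
  simpa using hf.norm.eventually (ge_mem_nhds (by simp : ‖(0 : E)‖ < 1))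

section SmallCumulants

variable {α 𝕜 : Type*} [NormedField 𝕜] [DecidableEq ι] {l : Filter α} {ε : α → ℝ}
  {u : α → Finset ι → 𝕜} {S : Finset ι}

theorem prod_isBigO_pow_of_connects (hε : ∀ᶠ a in l, ‖ε a‖ ≤ 1) {F : Finset (Finset ι)}
    (hF : F ⊆ S.powerset.erase ∅) (hconn : Connects S F)
    (hu : ∀ δ ∈ F, (u · δ) =O[l] (ε · ^ (#δ - 1))) :
    (fun a => ∏ δ ∈ F, u a δ) =O[l] (ε · ^ (#S - 1)) := by
  refine (IsBigO.finsetProd hu).trans (IsBigO.of_bound 1 (hε.mono fun a ha => ?_))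
  have := hconn.card_le_sum_card_sub_one hF
  rw [prod_pow_eq_pow_sum, one_mul, norm_pow, norm_pow]
  exact pow_le_pow_of_le_one (norm_nonneg _) ha (by omega)

theorem cumulantOn_isBigO (hε : ∀ᶠ a in l, ‖ε a‖ ≤ 1) (hS : S.Nonempty)
    (hu₀ : ∀ a, u a ∅ = 0) (hu : ∀ δ ⊆ S, (u · δ) =O[l] (ε · ^ (#δ - 1))) :
    (fun a => cumulantOn S fun Δ => ∏ δ ∈ Δ.powerset, (1 + u a δ)) =O[l] (ε · ^ (#S - 1)) := by
  simp only [cumulantOn_prod_powerset hS _ (hu₀ _)]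
  refine IsBigO.fun_sum fun F hF => ?_
  obtain ⟨hFS, hconn⟩ := mem_filter.1 hF
  exact prod_isBigO_pow_of_connects hε (mem_powerset.1 hFS) hconn fun δ hδ =>
    hu δ (mem_powerset.1 (mem_of_mem_erase (mem_powerset.1 hFS hδ)))

theorem isBigO_of_cumulantOn_isBigO (hε : Tendsto ε l (𝓝 0)) (hS : S.Nonempty)
    (hu₁ : ∀ a δ, #δ ≤ 1 → u a δ = 0) (hu : ∀ δ ⊂ S, (u · δ) =O[l] (ε · ^ (#δ - 1)))
    (hκ : (fun a => cumulantOn S fun Δ => ∏ δ ∈ Δ.powerset, (1 + u a δ)) =O[l]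
      (ε · ^ (#S - 1))) :
    (u · S) =O[l] (ε · ^ (#S - 1)) := by
  set W := (S.powerset.erase ∅).erase S
  have hW : ∀ δ ∈ W, δ ⊂ S := fun δ hδ => by
    simp only [W, mem_erase, mem_powerset] at hδ
    exact ssubset_of_subset_of_ne hδ.2.2 hδ.1
  set R := fun a => ∏ δ ∈ W, (1 + u a δ)
  set D := fun a => ∑ F ∈ W.powerset with Connects S F, ∏ δ ∈ F, u a δ
  have hsplit : ∀ a, u a S * R a = cumulantOn S (fun Δ => ∏ δ ∈ Δ.powerset, (1 + u a δ)) - D a :=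
    fun a => by
      rw [cumulantOn_prod_powerset hS _ (hu₁ a ∅ (by simp)), sum_connectedFamilies_prod hS]
      ring
  have hD : D =O[l] (ε · ^ (#S - 1)) := by
    refine IsBigO.fun_sum fun F hF => ?_
    obtain ⟨hFW, hconn⟩ := mem_filter.1 hF
    exact prod_isBigO_pow_of_connects hε.eventually_norm_le_one
      ((mem_powerset.1 hFW).trans (erase_subset _ _)) hconn
      fun δ hδ => hu δ (hW δ (mem_powerset.1 hFW hδ))
  have hR : Tendsto R l (𝓝 1) := by
    have hsmall : ∀ δ ∈ W, Tendsto (u · δ) l (𝓝 0) := fun δ hδ => by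
      by_cases hδ₁ : #δ ≤ 1
      · simpa only [hu₁ _ δ hδ₁] using tendsto_const_nhds
      · refine (hu δ (hW δ hδ)).trans_tendsto ?_
        simpa [zero_pow (by omega : #δ - 1 ≠ 0)] using hε.pow (#δ - 1)
    simpa using tendsto_finsetProd W fun δ hδ =>
      (tendsto_const_nhds (x := (1 : 𝕜))).add (hsmall δ hδ)
  have hRinv : (fun a => (R a)⁻¹) =O[l] fun _ => (1 : ℝ) :=
    (hR.inv₀ one_ne_zero).isBigO_one ℝ
  refine (((hκ.sub hD).congr_left fun a => (hsplit a).symm).mul hRinv).congr' ?_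
    (.of_forall fun a => mul_one _)
  filter_upwards [hR.eventually_ne one_ne_zero] with a ha
  field_simp

theorem forall_isBigO_iff_forall_cumulantOn_isBigO (hε : Tendsto ε l (𝓝 0))
    (hu₁ : ∀ a δ, #δ ≤ 1 → u a δ = 0) :
    (∀ S : Finset ι, 2 ≤ #S → (u · S) =O[l] (ε · ^ (#S - 1))) ↔
      ∀ S : Finset ι, 2 ≤ #S →
        (fun a => cumulantOn S fun Δ => ∏ δ ∈ Δ.powerset, (1 + u a δ)) =O[l]
          (ε · ^ (#S - 1)) := by
  have hsmall : ∀ S : Finset ι, ¬ 2 ≤ #S → (u · S) =O[l] (ε · ^ (#S - 1)) := fun S hS =>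
    (isBigO_zero _ l).congr_left fun a => (hu₁ a S (by omega)).symm
  constructor
  · intro h S hS
    exact cumulantOn_isBigO hε.eventually_norm_le_one (card_pos.1 (by omega))
      (fun a => hu₁ a ∅ (by simp)) fun δ _ => if hδ : 2 ≤ #δ then h δ hδ else hsmall δ hδ
  · intro h S
    induction S using Finset.strongInduction with
    | H S ih =>
      intro hS
      exact isBigO_of_cumulantOn_isBigO hε (card_pos.1 (by omega)) hu₁
        (fun δ hδ => if h2 : 2 ≤ #δ then ih δ hδ h2 else hsmall δ h2) (h S hS)

end SmallCumulants

theorem exists_bound_zpow_iff_isBigO {E : Type*} [Norm E] (f : ℕ → E) {k : ℕ} (hk : 1 ≤ k) :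
    (∃ C : ℝ, ∀ N : ℕ, 1 ≤ N → ‖f N‖ ≤ C * (N : ℝ) ^ (1 - (k : ℤ))) ↔
      f =O[atTop] fun N : ℕ => (N : ℝ)⁻¹ ^ (k - 1) := by
  have hpow : ∀ N : ℕ, (N : ℝ) ^ (1 - (k : ℤ)) = (N : ℝ)⁻¹ ^ (k - 1) := fun N => by
    rw [inv_pow, ← zpow_natCast, ← zpow_neg, Nat.cast_sub hk]
    ring_nf
  simp only [hpow]
  constructor
  · rintro ⟨C, hC⟩
    refine IsBigO.of_bound C (eventually_atTop.2 ⟨1, fun N hN => ?_⟩)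
    rw [Real.norm_of_nonneg (by positivity)]
    exact hC N hN
  · intro h
    obtain ⟨C, -, hC⟩ := bound_of_isBigO_nat_atTop h
    refine ⟨C, fun N hN => ?_⟩
    have hpos : 0 < (N : ℝ)⁻¹ ^ (k - 1) := by positivity
    simpa only [Real.norm_of_nonneg hpos.le] using hC hpos.ne'

theorem quasi_factorization_iff_small_cumulants_general
    {Ω : Type} [MeasurableSpace Ω] (μ : MeasureTheory.Measure Ω)
    [MeasureTheory.IsProbabilityMeasure μ]
    (ℓ : ℕ) (A : ℕ → Fin ℓ → Ω → ℂ)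
    (hmean : ∀ (N : ℕ) (j : Fin ℓ), (∫ ω, A N j ω ∂μ) = 1)
    (M : ℕ → Finset (Fin ℓ) → ℂ)
    (hM : ∀ (N : ℕ) (Δ : Finset (Fin ℓ)), M N Δ = ∫ ω, ∏ j ∈ Δ, A N j ω ∂μ)
    (U : ℕ → Finset (Fin ℓ) → ℂ)
    (hU : ∀ (N : ℕ) (Δ : Finset (Fin ℓ)), ∏ δ ∈ Δ.powerset, U N δ = M N Δ) :
    ((∀ Δ : Finset (Fin ℓ), 2 ≤ Δ.card → ∃ C : ℝ, ∀ N : ℕ, 1 ≤ N →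
        ‖U N Δ - 1‖ ≤ C * (N : ℝ) ^ (1 - (Δ.card : ℤ))) ↔
      (∀ Δ : Finset (Fin ℓ), 2 ≤ Δ.card → ∃ C : ℝ, ∀ N : ℕ, 1 ≤ N →
        ‖cumulantOn Δ (M N)‖ ≤ C * (N : ℝ) ^ (1 - (Δ.card : ℤ)))) := by
  have hU₀ : ∀ N, U N ∅ = 1 := fun N => by simpa [hM] using hU N ∅
  have hU₁ : ∀ N (δ : Finset (Fin ℓ)), #δ ≤ 1 → U N δ - 1 = 0 := by
    intro N δ hδ
    rcases Nat.le_one_iff_eq_zero_or_eq_one.1 hδ with h | h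
    · rw [card_eq_zero.1 h, hU₀, sub_self]
    · obtain ⟨j, rfl⟩ := card_eq_one.1 h
      have hps : ({j} : Finset (Fin ℓ)).powerset = {∅, {j}} := by
        ext s
        simp [subset_singleton_iff]
      have := hU N {j}
      rw [hps, prod_pair (singleton_ne_empty j).symm, hU₀, one_mul, hM] at this
      simp [this, hmean]
  have hMU : ∀ N, M N = fun Δ => ∏ δ ∈ Δ.powerset, (1 + (U N δ - 1)) := fun N =>
    funext fun Δ => by simp [← hU N Δ]
  simp only [hMU]
  exact (forall₂_congr fun Δ hΔ => exists_bound_zpow_iff_isBigO _ (by omega)).trans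
    ((forall_isBigO_iff_forall_cumulantOn_isBigO tendsto_inv_atTop_nhds_zero_nat hU₁).trans
      (forall₂_congr fun Δ hΔ => (exists_bound_zpow_iff_isBigO _ (by omega)).symm))

/-- Lemma 2.2 (general criterion for small cumulants): for sequences of (complex-valued)
random variables with expectation 1 and nonzero joint moments, the quasi-factorization
property (I) is equivalent to the small cumulant property (II).  The family `U` is the
unique family satisfying `Π_{δ ⊆ Δ} U_δ = M_Δ`. -/
theorem quasi_factorization_iff_small_cumulants
    {Ω : Type} [MeasurableSpace Ω] (μ : MeasureTheory.Measure Ω)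
    [MeasureTheory.IsProbabilityMeasure μ]
    (ℓ : ℕ) (A : ℕ → Fin ℓ → Ω → ℂ)
    (hint : ∀ (N : ℕ) (Δ : Finset (Fin ℓ)),
      MeasureTheory.Integrable (fun ω => ∏ j ∈ Δ, A N j ω) μ)
    (hmean : ∀ (N : ℕ) (j : Fin ℓ), (∫ ω, A N j ω ∂μ) = 1)
    (M : ℕ → Finset (Fin ℓ) → ℂ)
    (hM : ∀ (N : ℕ) (Δ : Finset (Fin ℓ)), M N Δ = ∫ ω, ∏ j ∈ Δ, A N j ω ∂μ)
    (hMne : ∀ (N : ℕ) (Δ : Finset (Fin ℓ)), M N Δ ≠ 0)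
    (U : ℕ → Finset (Fin ℓ) → ℂ)
    (hU : ∀ (N : ℕ) (Δ : Finset (Fin ℓ)), ∏ δ ∈ Δ.powerset, U N δ = M N Δ) :
    ((∀ Δ : Finset (Fin ℓ), 2 ≤ Δ.card → ∃ C : ℝ, ∀ N : ℕ, 1 ≤ N →
        ‖U N Δ - 1‖ ≤ C * (N : ℝ) ^ (1 - (Δ.card : ℤ))) ↔
      (∀ Δ : Finset (Fin ℓ), 2 ≤ Δ.card → ∃ C : ℝ, ∀ N : ℕ, 1 ≤ N →
        ‖cumulantOn Δ (M N)‖ ≤ C * (N : ℝ) ^ (1 - (Δ.card : ℤ)))) :=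
  quasi_factorization_iff_small_cumulants_general μ ℓ A hmean M hM U hU
end
end

section
/- Let ℓ ≥ 2 be an integer and a_1, …, a_{ℓ−1} positive integers. Then, as the real number X tends to +∞, ∏_{δ ⊆ [ℓ−1]} ( X − Σ_{j ∈ δ} a_j )^{(−1)^{|δ|}} = 1 + O(X^{−ℓ+1}), where the product runs over all subsets δ of [ℓ−1] (including the empty set) and each factor appears with exponent +1 if |δ| is even and −1 if |δ| is odd. -/
/-!
Taking logarithms, the product is `exp S` with `S = ∑_δ (-1)^|δ| log (X - ∑_{j∈δ} a_j)`, which is an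
`(ℓ-1)`-fold iterated finite difference of `log` at `X` with steps `a_j`. Applying the mean value
theorem once per step bounds it by `∏ a_j` times the sup of `|log⁽ˡ⁻¹⁾| = (ℓ-2)! / x^(ℓ-1)` on
`[X - ∑ a_j, X]`, so `|S| = O(X^(-ℓ+1))`, and `|exp S - 1| ≤ 2 |S|` once `|S| ≤ 1`.
-/

open Finset Set

noncomputable def iteratedDerivLog : ℕ → ℝ → ℝ
  | 0 => Real.log
  | k + 1 => fun x => (-1) ^ k * k.factorial / x ^ (k + 1)

lemma hasDerivAt_iteratedDerivLog (k : ℕ) {x : ℝ} (hx : 0 < x) :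
    HasDerivAt (iteratedDerivLog k) (iteratedDerivLog (k + 1) x) x := by
  cases k with
  | zero => simpa [iteratedDerivLog] using Real.hasDerivAt_log hx.ne'
  | succ k =>
    have h := ((hasDerivAt_pow (k + 1) x).inv (pow_ne_zero _ hx.ne')).const_mul
      ((-1 : ℝ) ^ k * k.factorial)
    have hfun : iteratedDerivLog (k + 1) =
        fun y : ℝ => (-1) ^ k * (k.factorial : ℝ) * (y ^ (k + 1))⁻¹ := by
      funext y
      simp [iteratedDerivLog, div_eq_mul_inv]
    rw [hfun]
    refine h.congr_deriv ?_
    simp only [iteratedDerivLog, Nat.factorial_succ]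
    push_cast
    field_simp
    ring

lemma abs_iteratedDerivLog_succ_le (k : ℕ) {x y : ℝ} (hx : 0 < x) (hxy : x ≤ y) :
    |iteratedDerivLog (k + 1) y| ≤ k.factorial / x ^ (k + 1) := by
  have hy : 0 < y := hx.trans_le hxy
  simp only [iteratedDerivLog, abs_div, abs_mul, abs_pow, abs_neg, abs_one, one_pow, one_mul,
    Nat.abs_cast, abs_of_pos hy]
  gcongr

lemma abs_sum_powerset_neg_one_pow_mul_le {ι : Type*} (s : Finset ι) (b : ι → ℝ)
    (hb : ∀ i ∈ s, 0 ≤ b i) (X : ℝ) (F : ℕ → ℝ → ℝ) (M : ℝ)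
    (hF : ∀ k, ∀ x ∈ Icc (X - ∑ i ∈ s, b i) X, HasDerivAt (F k) (F (k + 1) x) x)
    (hM : ∀ x ∈ Icc (X - ∑ i ∈ s, b i) X, |F #s x| ≤ M) :
    |∑ δ ∈ s.powerset, (-1) ^ #δ * F 0 (X - ∑ i ∈ δ, b i)| ≤ M * ∏ i ∈ s, b i := by
  classical
  induction s using Finset.induction_on generalizing F M with
  | empty => simpa using hM X (by simp)
  | @insert a s ha ih =>
    have hc : 0 ≤ b a := hb a (mem_insert_self a s)
    have hs : 0 ≤ ∑ i ∈ s, b i := sum_nonneg fun i hi => hb i (mem_insert_of_mem hi)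
    simp only [sum_insert ha] at hF hM
    rw [card_insert_of_notMem ha] at hM
    have hIcc {x} (hx : x ∈ Icc (X - ∑ i ∈ s, b i) X) :
        Icc (x - b a) x ⊆ Icc (X - (b a + ∑ i ∈ s, b i)) X :=
      Icc_subset_Icc (by linarith [hx.1]) hx.2
    -- Peeling off `a` replaces `F` by its difference `F - F (· - b a)`, bounded by the MVT.
    let G : ℕ → ℝ → ℝ := fun k x => F k x - F k (x - b a)
    have hG : ∀ k, ∀ x ∈ Icc (X - ∑ i ∈ s, b i) X, HasDerivAt (G k) (G (k + 1) x) x := by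
      intro k x hx
      have hshift := (hF k (x - b a) (hIcc hx ⟨le_rfl, by linarith⟩)).comp_sub_const x (b a)
      exact (hF k x (hIcc hx ⟨by linarith, le_rfl⟩)).sub hshift
    have hGM : ∀ x ∈ Icc (X - ∑ i ∈ s, b i) X, |G #s x| ≤ M * b a := by
      intro x hx
      have := (convex_Icc (x - b a) x).norm_image_sub_le_of_norm_hasDerivWithin_le
        (fun y hy => (hF #s y (hIcc hx hy)).hasDerivWithinAt)
        (fun y hy => hM y (hIcc hx hy))
        (left_mem_Icc.2 (by linarith)) (right_mem_Icc.2 (by linarith))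
      simpa [Real.norm_eq_abs, abs_of_nonneg hc] using this
    have hsplit : ∑ δ ∈ (insert a s).powerset, (-1) ^ #δ * F 0 (X - ∑ i ∈ δ, b i)
        = ∑ δ ∈ s.powerset, (-1) ^ #δ * G 0 (X - ∑ i ∈ δ, b i) := by
      rw [sum_powerset_insert ha, ← sum_add_distrib]
      refine sum_congr rfl fun δ hδ => ?_
      have haδ : a ∉ δ := fun h => ha (mem_powerset.1 hδ h)
      rw [card_insert_of_notMem haδ, sum_insert haδ, sub_add_eq_sub_sub_swap]
      ring
    rw [hsplit, prod_insert ha, ← mul_assoc]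
    exact ih (fun i hi => hb i (mem_insert_of_mem hi)) G (M * b a) hG hGM

lemma abs_sum_powerset_neg_one_pow_mul_log_le {ι : Type*} (s : Finset ι) (b : ι → ℝ)
    (hb : ∀ i ∈ s, 0 ≤ b i) {k : ℕ} (hs : #s = k + 1) {X : ℝ} (hX : 0 < X - ∑ i ∈ s, b i) :
    |∑ δ ∈ s.powerset, (-1) ^ #δ * Real.log (X - ∑ i ∈ δ, b i)|
      ≤ (k.factorial * ∏ i ∈ s, b i) / (X - ∑ i ∈ s, b i) ^ (k + 1) := by
  have h := abs_sum_powerset_neg_one_pow_mul_le s b hb X iteratedDerivLog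
    (k.factorial / (X - ∑ i ∈ s, b i) ^ (k + 1))
    (fun j x hx => hasDerivAt_iteratedDerivLog j (hX.trans_le hx.1))
    (fun x hx => hs ▸ abs_iteratedDerivLog_succ_le k hX hx.1)
  rwa [div_mul_eq_mul_div] at h

lemma prod_zpow_eq_exp_sum_mul_log {ι : Type*} (t : Finset ι) (f : ι → ℝ) (e : ι → ℤ)
    (hf : ∀ i ∈ t, 0 < f i) :
    ∏ i ∈ t, f i ^ e i = Real.exp (∑ i ∈ t, e i * Real.log (f i)) := by
  rw [Real.exp_sum]
  refine prod_congr rfl fun i hi => ?_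
  rw [← Real.log_zpow, Real.exp_log (zpow_pos (hf i hi) _)]

lemma abs_prod_powerset_zpow_sub_one_le {ι : Type*} (s : Finset ι) (b : ι → ℝ)
    (hb : ∀ i ∈ s, 0 ≤ b i) {m : ℕ} (hs : #s = m + 1) {X : ℝ}
    (hX : 2 * ∑ i ∈ s, b i + 2 * (m.factorial * ∏ i ∈ s, b i) + 2 ≤ X) :
    |∏ δ ∈ s.powerset, (X - ∑ i ∈ δ, b i) ^ ((-1 : ℤ) ^ #δ) - 1|
      ≤ 2 ^ (m + 2) * (m.factorial * ∏ i ∈ s, b i) / X ^ (m + 1) := by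
  set A := ∑ i ∈ s, b i
  set B := m.factorial * ∏ i ∈ s, b i
  have hA : 0 ≤ A := sum_nonneg hb
  have hB : 0 ≤ B := mul_nonneg (Nat.cast_nonneg _) (prod_nonneg hb)
  have hpos : ∀ δ ∈ s.powerset, 0 < X - ∑ i ∈ δ, b i := fun δ hδ => by
    linarith [sum_le_sum_of_subset_of_nonneg (mem_powerset.1 hδ) fun i hi _ => hb i hi]
  have hXA_half : X / 2 ≤ X - A := by linarith
  have hX_half : 0 < X / 2 := by linarith
  have hXA_one : 1 ≤ X - A := by linarith
  set S := ∑ δ ∈ s.powerset, (-1) ^ #δ * Real.log (X - ∑ i ∈ δ, b i)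
  have hS : |S| ≤ B / (X - A) ^ (m + 1) :=
    abs_sum_powerset_neg_one_pow_mul_log_le s b hb hs (by linarith)
  have hS_le_one : |S| ≤ 1 := by
    refine hS.trans ((div_le_one (pow_pos (by linarith) _)).2 ?_)
    calc B ≤ X - A := by linarith
      _ ≤ (X - A) ^ (m + 1) := le_self_pow₀ hXA_one m.succ_ne_zero
  have hP : ∏ δ ∈ s.powerset, (X - ∑ i ∈ δ, b i) ^ ((-1 : ℤ) ^ #δ) = Real.exp S := by
    rw [prod_zpow_eq_exp_sum_mul_log _ _ _ hpos]
    push_cast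
    rfl
  rw [hP]
  calc |Real.exp S - 1| ≤ 2 * |S| := Real.abs_exp_sub_one_le hS_le_one
    _ ≤ 2 * (B / (X / 2) ^ (m + 1)) := by
      gcongr
      exact hS.trans (div_le_div_of_nonneg_left hB (by positivity) (by gcongr))
    _ = 2 ^ (m + 2) * B / X ^ (m + 1) := by
      rw [div_pow]
      field_simp
      ring

theorem alternating_product_estimate_general (ℓ : ℕ) (hℓ : 2 ≤ ℓ)
    (a : Fin (ℓ - 1) → ℕ) :
    ∃ C X₀ : ℝ, ∀ X : ℝ, X₀ ≤ X →
      |(∏ δ ∈ (Finset.univ : Finset (Fin (ℓ - 1))).powerset,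
          (X - ∑ j ∈ δ, (a j : ℝ)) ^ ((-1 : ℤ) ^ δ.card)) - 1|
        ≤ C / X ^ (ℓ - 1) := by
  obtain ⟨m, rfl⟩ : ∃ m, ℓ = m + 2 := ⟨ℓ - 2, by omega⟩
  have hcard : #(univ : Finset (Fin (m + 2 - 1))) = m + 1 := by simp
  exact ⟨_, _, fun X hX => abs_prod_powerset_zpow_sub_one_le univ (fun j => (a j : ℝ))
    (fun j _ => Nat.cast_nonneg _) hcard hX⟩

/-- Lemma 2.3: for positive integers `a_1,…,a_{ℓ−1}`,
`Π_{δ ⊆ [ℓ−1]} (X − Σ_{j∈δ} a_j)^{(−1)^{|δ|}} = 1 + O(X^{−ℓ+1})` as `X → +∞`. -/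
theorem alternating_product_estimate (ℓ : ℕ) (hℓ : 2 ≤ ℓ)
    (a : Fin (ℓ - 1) → ℕ) (ha : ∀ j, 0 < a j) :
    ∃ C X₀ : ℝ, ∀ X : ℝ, X₀ ≤ X →
      |(∏ δ ∈ (Finset.univ : Finset (Fin (ℓ - 1))).powerset,
          (X - ∑ j ∈ δ, (a j : ℝ)) ^ ((-1 : ℤ) ^ δ.card)) - 1|
        ≤ C / X ^ (ℓ - 1) :=
  alternating_product_estimate_general ℓ hℓ a
end

section
/- Let ℓ ≥ 2 be an integer and a_1, …, a_{ℓ−1} positive integers. Define the polynomials R_ev(X) = ∏_δ (X − Σ_{j∈δ} a_j), the product over subsets δ ⊆ [ℓ−1] of even cardinality, and R_odd(X) = ∏_δ (X − Σ_{j∈δ} a_j), the product over subsets δ ⊆ [ℓ−1] of odd cardinality. Then both R_ev and R_odd are monic polynomials of degree 2^{ℓ−2}, and the difference R_ev − R_odd is a polynomial of degree at most 2^{ℓ−2} − ℓ + 1. -/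
/-!
Write `E s`, `O s` for the products over the even and odd subsets of `s`. Splitting the
subsets of `insert i s` according to whether they contain `i` gives
`E (insert i s) = E s · (O s)(X - aᵢ)` and `O (insert i s) = O s · (E s)(X - aᵢ)`, so both
degrees double with each new element. The new difference equals
`(E - O) · (E(X - aᵢ) - E) - E · ((E - O)(X - aᵢ) - (E - O))`, and a shift `p(X - c) - p` has
degree below `deg p`; hence the gap `deg E - deg (E - O)` grows by at least one with each new
element, starting from `1` for a singleton.
-/

open scoped BigOperators

noncomputable section

/-- The polynomial `R_ev(X) = Π_{δ ⊆ [ℓ−1], |δ| even} (X − Σ_{j∈δ} a_j)`. -/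
def Rev (ℓ : ℕ) (a : Fin (ℓ - 1) → ℕ) : Polynomial ℝ :=
  ∏ δ ∈ (Finset.univ : Finset (Fin (ℓ - 1))).powerset.filter (fun δ => Even δ.card),
    (Polynomial.X - Polynomial.C (∑ j ∈ δ, (a j : ℝ)))

/-- The polynomial `R_odd(X) = Π_{δ ⊆ [ℓ−1], |δ| odd} (X − Σ_{j∈δ} a_j)`. -/
def Rodd (ℓ : ℕ) (a : Fin (ℓ - 1) → ℕ) : Polynomial ℝ :=
  ∏ δ ∈ (Finset.univ : Finset (Fin (ℓ - 1))).powerset.filter (fun δ => Odd δ.card),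
    (Polynomial.X - Polynomial.C (∑ j ∈ δ, (a j : ℝ)))

open Finset Polynomial

namespace Polynomial

variable {R : Type*} [CommRing R]

theorem Monic.taylor {p : R[X]} (hp : p.Monic) (r : R) : (taylor r p).Monic :=
  (leadingCoeff_taylor r p).trans hp

theorem degree_taylor_sub_lt {p : R[X]} {n : ℕ} (hp : p.degree ≤ n) (r : R) :
    (taylor r p - p).degree < n := by
  rcases eq_or_ne p 0 with rfl | hp0
  · simp
  · exact (degree_sub_lt_left (degree_taylor p r) (mt (taylor_eq_zero r p).mp hp0)
      (leadingCoeff_taylor r p)).trans_le ((degree_taylor p r).trans_le hp)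

theorem degree_mul_lt_of_le_of_lt {p q : R[X]} {m n : ℕ} (hp : p.degree ≤ m)
    (hq : q.degree < n) : (p * q).degree < ↑(m + n) := by
  rcases eq_or_ne p 0 with rfl | hp0
  · simp
  · refine (degree_mul_le p q).trans_lt ?_
    rw [Nat.cast_add]
    exact WithBot.add_lt_add_of_le_of_lt (by simpa using hp0) hp hq

theorem degree_mul_taylor_sub_mul_taylor_lt {p q : R[X]} {m n : ℕ} (hp : p.degree ≤ n)
    (hpq : (p - q).degree ≤ m) (r : R) :
    (p * taylor r q - q * taylor r p).degree < ↑(m + n) := by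
  have cross : p * taylor r q - q * taylor r p
      = (p - q) * (taylor r p - p) - p * (taylor r (p - q) - (p - q)) := by
    rw [map_sub]; ring
  rw [cross]
  refine (degree_sub_le _ _).trans_lt (max_lt ?_ ?_)
  · exact degree_mul_lt_of_le_of_lt hpq (degree_taylor_sub_lt hp r)
  · rw [add_comm]
    exact degree_mul_lt_of_le_of_lt hp (degree_taylor_sub_lt hpq r)

variable {ι : Type*}

def subsetSumProd (P : ℕ → Prop) [DecidablePred P] (s : Finset ι) (a : ι → R) : R[X] :=
  ∏ δ ∈ s.powerset with P #δ, (X - C (∑ j ∈ δ, a j))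

theorem monic_subsetSumProd (P : ℕ → Prop) [DecidablePred P] (s : Finset ι) (a : ι → R) :
    (subsetSumProd P s a).Monic :=
  monic_prod_of_monic _ _ fun _ _ => monic_X_sub_C _

theorem subsetSumProd_insert [DecidableEq ι] {P Q : ℕ → Prop} [DecidablePred P]
    [DecidablePred Q] (hPQ : ∀ n, P (n + 1) ↔ Q n) {i : ι} {s : Finset ι} (hi : i ∉ s) (a : ι → R) :
    subsetSumProd P (insert i s) a
      = subsetSumProd P s a * taylor (-a i) (subsetSumProd Q s a) := by
  simp only [subsetSumProd, prod_filter, prod_powerset_insert hi]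
  rw [taylor_apply, prod_comp]
  congr 1
  refine prod_congr rfl fun δ hδ => ?_
  have hiδ : i ∉ δ := fun h => hi (mem_powerset.mp hδ h)
  rw [card_insert_of_notMem hiδ, sum_insert hiδ, apply_ite (fun p : R[X] => p.comp _), one_comp]
  refine if_congr (hPQ #δ) ?_ rfl
  simp only [sub_comp, X_comp, C_comp, C_add, C_neg]
  ring

theorem subsetSumProd_even_insert [DecidableEq ι] {i : ι} {s : Finset ι} (hi : i ∉ s)
    (a : ι → R) : subsetSumProd Even (insert i s) a
      = subsetSumProd Even s a * taylor (-a i) (subsetSumProd Odd s a) :=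
  subsetSumProd_insert (fun _ => Nat.even_add_one.trans Nat.not_even_iff_odd) hi a

theorem subsetSumProd_odd_insert [DecidableEq ι] {i : ι} {s : Finset ι} (hi : i ∉ s)
    (a : ι → R) : subsetSumProd Odd (insert i s) a
      = subsetSumProd Odd s a * taylor (-a i) (subsetSumProd Even s a) :=
  subsetSumProd_insert (fun _ => Nat.odd_add_one.trans Nat.not_odd_iff_even) hi a

theorem subsetSumProd_even_singleton [DecidableEq ι] (i : ι) (a : ι → R) :
    subsetSumProd Even {i} a = X := by
  rw [← insert_empty, subsetSumProd_even_insert (notMem_empty i)]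
  simp [subsetSumProd, filter_singleton]

theorem subsetSumProd_odd_singleton [DecidableEq ι] (i : ι) (a : ι → R) :
    subsetSumProd Odd {i} a = X - C (a i) := by
  rw [← insert_empty, subsetSumProd_odd_insert (notMem_empty i)]
  simp [subsetSumProd, filter_singleton, sub_eq_add_neg]

theorem natDegree_subsetSumProd_even_odd [Nontrivial R] {s : Finset ι} (hs : s.Nonempty)
    (a : ι → R) : (subsetSumProd Even s a).natDegree = 2 ^ (#s - 1) ∧
      (subsetSumProd Odd s a).natDegree = 2 ^ (#s - 1) := by
  classical
  induction hs using Nonempty.cons_induction with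
  | singleton i => simp [subsetSumProd_even_singleton, subsetSumProd_odd_singleton]
  | cons i s hi hs ih =>
    rw [cons_eq_insert, subsetSumProd_even_insert hi, subsetSumProd_odd_insert hi,
      card_insert_of_notMem hi, Nat.add_sub_cancel,
      ← Nat.two_pow_pred_add_two_pow_pred hs.card_pos,
      (monic_subsetSumProd _ _ _).natDegree_mul ((monic_subsetSumProd _ _ _).taylor _),
      (monic_subsetSumProd _ _ _).natDegree_mul ((monic_subsetSumProd _ _ _).taylor _),
      natDegree_taylor, natDegree_taylor, ih.1, ih.2]
    exact ⟨rfl, rfl⟩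

theorem degree_subsetSumProd_even_sub_odd_le [Nontrivial R] {s : Finset ι} (hs : s.Nonempty)
    (a : ι → R) :
    (subsetSumProd Even s a - subsetSumProd Odd s a).degree ≤ ↑(2 ^ (#s - 1) - #s) := by
  classical
  induction hs using Nonempty.cons_induction with
  | singleton i =>
    simpa [subsetSumProd_even_singleton, subsetSumProd_odd_singleton] using degree_C_le
  | cons i s hi hs ih =>
    have hE := degree_le_of_natDegree_le (natDegree_subsetSumProd_even_odd hs a).1.le
    have hlt := degree_mul_taylor_sub_mul_taylor_lt hE ih (-a i)
    rw [cons_eq_insert, subsetSumProd_even_insert hi, subsetSumProd_odd_insert hi,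
      card_insert_of_notMem hi, Nat.add_sub_cancel,
      ← Nat.two_pow_pred_add_two_pow_pred hs.card_pos]
    have hm : #s ≤ 2 ^ (#s - 1) := Nat.le_of_pred_lt Nat.lt_two_pow_self
    have hs₀ := hs.card_pos
    generalize 2 ^ (#s - 1) = N at hm hlt ⊢
    rw [show N - #s + N = N + N - (#s + 1) + 1 by omega] at hlt
    exact Order.le_of_lt_succ hlt

end Polynomial

theorem Rev_sub_Rodd_degree_general (ℓ : ℕ) (hℓ : 2 ≤ ℓ) (a : Fin (ℓ - 1) → ℕ) :
    (Rev ℓ a).Monic ∧ (Rodd ℓ a).Monic ∧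
    (Rev ℓ a).natDegree = 2 ^ (ℓ - 2) ∧ (Rodd ℓ a).natDegree = 2 ^ (ℓ - 2) ∧
    (Rev ℓ a - Rodd ℓ a).degree ≤ ((2 ^ (ℓ - 2) + 1 - ℓ : ℕ) : WithBot ℕ) := by
  have huniv : (univ : Finset (Fin (ℓ - 1))).Nonempty := univ_nonempty_iff.mpr ⟨⟨0, by omega⟩⟩
  obtain ⟨hEdeg, hOdeg⟩ := natDegree_subsetSumProd_even_odd huniv (fun j => (a j : ℝ))
  have hdiff := degree_subsetSumProd_even_sub_odd_le huniv (fun j => (a j : ℝ))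
  rw [card_fin, show ℓ - 1 - 1 = ℓ - 2 by omega] at hEdeg hOdeg hdiff
  rw [show 2 ^ (ℓ - 2) - (ℓ - 1) = 2 ^ (ℓ - 2) + 1 - ℓ by omega] at hdiff
  exact ⟨monic_subsetSumProd _ _ _, monic_subsetSumProd _ _ _, hEdeg, hOdeg, hdiff⟩

/-- `R_ev` and `R_odd` are monic of degree `2^{ℓ−2}`, and their difference has degree at
most `2^{ℓ−2} − ℓ + 1` (written `2^{ℓ−2} + 1 − ℓ` to avoid truncated subtraction). -/
theorem Rev_sub_Rodd_degree (ℓ : ℕ) (hℓ : 2 ≤ ℓ) (a : Fin (ℓ - 1) → ℕ)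
    (ha : ∀ j, 0 < a j) :
    (Rev ℓ a).Monic ∧ (Rodd ℓ a).Monic ∧
    (Rev ℓ a).natDegree = 2 ^ (ℓ - 2) ∧ (Rodd ℓ a).natDegree = 2 ^ (ℓ - 2) ∧
    (Rev ℓ a - Rodd ℓ a).degree ≤ ((2 ^ (ℓ - 2) + 1 - ℓ : ℕ) : WithBot ℕ) :=
  Rev_sub_Rodd_degree_general ℓ hℓ a

end
end

section
/- Let G be a finite graph with vertex set V, and let f : V → W be a surjective map. Then the number of connected components of G satisfies #Conn(G) ≤ #Conn(G/f) + Σ_{w ∈ W} ( #Conn(G[f^{−1}(w)]) − 1 ), where G/f is the quotient graph and G[f^{−1}(w)] is the subgraph induced on the fiber f^{−1}(w). -/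
/-!
The number of connected components is submodular on the lattice of graphs on a fixed finite
vertex set: adding an edge lowers the count by one exactly when its endpoints were not yet
connected, which happens less often in a larger graph. Apply this to `G` and the graph `F`
joining any two vertices with the same image under `f`. Then `F` has one component for each
point of `W`, the components of `G ⊔ F` are those of `G/f`, and the components of `G ⊓ F` are
those of the fibres `G[f⁻¹(w)]`.
-/

namespace SimpleGraph

variable {V W α : Type*} {G : SimpleGraph V}

theorem reachable_le_of_adj_le {r : V → V → Prop} (hr : Equivalence r) (h : G.Adj ≤ r) :
    G.Reachable ≤ r := by
  rw [reachable_eq_reflTransGen]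
  exact Relation.reflTransGen_le_of_equivalence_of_le hr h

theorem card_connectedComponent_eq_card_range {g : V → α}
    (h : ∀ a b, G.Reachable a b ↔ g a = g b) :
    Nat.card G.ConnectedComponent = Nat.card (Set.range g) := by
  have hker : G.Reachable = (Setoid.ker g).r := funext₂ fun a b => propext (h a b)
  unfold ConnectedComponent
  rw [hker]
  exact Nat.card_congr (Setoid.quotientKerEquivRange g)

theorem card_connectedComponent_eq_card_of_surjective {g : V → α} (hg : g.Surjective)
    (h : ∀ a b, G.Reachable a b ↔ g a = g b) :
    Nat.card G.ConnectedComponent = Nat.card α := by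
  rw [card_connectedComponent_eq_card_range h, hg.range_eq, Nat.card_univ]

open scoped Classical in
noncomputable def mergeComponents (G : SimpleGraph V) (u v : V) (C : G.ConnectedComponent) :
    G.ConnectedComponent :=
  if C = G.connectedComponentMk v then G.connectedComponentMk u else C

theorem reachable_sup_edge_iff {u v a b : V} :
    (G ⊔ edge u v).Reachable a b ↔
      G.mergeComponents u v (G.connectedComponentMk a) =
        G.mergeComponents u v (G.connectedComponentMk b) := by
  constructor
  · refine fun hab => reachable_le_of_adj_le
      (Setoid.ker fun x => G.mergeComponents u v (G.connectedComponentMk x)).iseqv ?_ a b hab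
    rintro x y (hxy | hxy)
    · exact congrArg _ (ConnectedComponent.sound hxy.reachable)
    · rw [edge_adj] at hxy
      rcases hxy.1 with ⟨rfl, rfl⟩ | ⟨rfl, rfl⟩ <;>
        by_cases huv : G.connectedComponentMk x = G.connectedComponentMk y <;>
        simp_all [mergeComponents]
  · have huv : (G ⊔ edge u v).Reachable u v := by
      by_cases h : u = v
      · rw [h]
      · exact Adj.reachable (Or.inr (by simp [edge_adj, h]))
    have hG {x y : V} (h : G.connectedComponentMk x = G.connectedComponentMk y) :
        (G ⊔ edge u v).Reachable x y :=
      (ConnectedComponent.exact h).mono le_sup_left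
    unfold mergeComponents
    split_ifs with ha hb hb <;> intro hab
    · exact hG (ha.trans hb.symm)
    · exact ((hG ha).trans huv.symm).trans (hG hab)
    · exact ((hG hab).trans huv).trans (hG hb.symm)
    · exact hG hab

open scoped Classical in
theorem card_connectedComponent_sup_edge [Finite V] (u v : V) :
    Nat.card (G ⊔ edge u v).ConnectedComponent + (if G.Reachable u v then 0 else 1) =
      Nat.card G.ConnectedComponent := by
  have hmk : (G.connectedComponentMk).Surjective := Quot.mk_surjective
  rw [card_connectedComponent_eq_card_range (fun a b => reachable_sup_edge_iff),
    ← Function.comp_def, hmk.range_comp]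
  split_ifs with huv
  · have hid : G.mergeComponents u v = id := by
      ext1 C
      simp only [mergeComponents, ← ConnectedComponent.sound huv, id_eq, ite_eq_right_iff]
      exact Eq.symm
    rw [hid, Set.range_id, Nat.card_univ, add_zero]
  · have hne : G.connectedComponentMk u ≠ G.connectedComponentMk v :=
      fun h => huv (ConnectedComponent.exact h)
    have hrange : Set.range (G.mergeComponents u v) = {G.connectedComponentMk v}ᶜ := by
      ext C
      simp only [Set.mem_range, Set.mem_compl_singleton_iff, mergeComponents]
      refine ⟨?_, fun hC => ⟨C, if_neg hC⟩⟩
      rintro ⟨D, rfl⟩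
      split_ifs <;> assumption
    have hpos : 0 < Nat.card G.ConnectedComponent :=
      Nat.card_pos_iff.2 ⟨⟨G.connectedComponentMk v⟩, inferInstance⟩
    rw [hrange, Nat.card_coe_set_eq, Set.ncard_compl, Set.ncard_singleton]
    omega

theorem card_connectedComponent_add_le_of_le [Finite V] {A X : SimpleGraph V} (hAX : A ≤ X)
    (B : SimpleGraph V) :
    Nat.card X.ConnectedComponent + Nat.card (A ⊔ B).ConnectedComponent ≤
      Nat.card (X ⊔ B).ConnectedComponent + Nat.card A.ConnectedComponent := by
  classical
  rw [← fromEdgeSet_edgeSet B]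
  induction B.edgeSet, Set.toFinite B.edgeSet using Set.Finite.induction_on with
  | empty => simp [fromEdgeSet_empty]
  | @insert e s _ _ ih =>
    induction e using Sym2.ind with | h u v => ?_
    rw [Set.insert_eq, fromEdgeSet_union, ← edge, sup_comm (edge u v), ← sup_assoc,
      ← sup_assoc]
    have hA := card_connectedComponent_sup_edge (G := A ⊔ fromEdgeSet s) u v
    have hX := card_connectedComponent_sup_edge (G := X ⊔ fromEdgeSet s) u v
    have hmono (h : (A ⊔ fromEdgeSet s).Reachable u v) : (X ⊔ fromEdgeSet s).Reachable u v :=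
      h.mono (sup_le_sup_right hAX _)
    split_ifs at hA hX <;> first | omega | exact absurd (hmono ‹_›) ‹_›

theorem card_connectedComponent_add_le_sup_add_inf [Finite V] (X Y : SimpleGraph V) :
    Nat.card X.ConnectedComponent + Nat.card Y.ConnectedComponent ≤
      Nat.card (X ⊔ Y).ConnectedComponent + Nat.card (X ⊓ Y).ConnectedComponent := by
  have h := card_connectedComponent_add_le_of_le (inf_le_left : X ⊓ Y ≤ X) Y
  rwa [sup_eq_right.2 inf_le_right] at h

theorem reachable_induce_iff {s : Set V} (hs : ∀ a b, G.Adj a b → a ∈ s → b ∈ s) {a b : V}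
    (ha : a ∈ s) (hb : b ∈ s) :
    (G.induce s).Reachable ⟨a, ha⟩ ⟨b, hb⟩ ↔ G.Reachable a b := by
  refine ⟨fun h => h.map (Embedding.induce s).toHom, ?_⟩
  rintro ⟨p⟩
  induction p with
  | nil => rfl
  | cons hadj _ ih =>
    have hc := hs _ _ hadj ha
    exact (Adj.reachable (show (G.induce s).Adj ⟨_, ha⟩ ⟨_, hc⟩ from hadj)).trans (ih hc hb)

theorem card_connectedComponent_eq_sum_induce_fiber [Finite V] [Fintype W]
    {f : V → W} (hf : ∀ a b, G.Adj a b → f a = f b) :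
    Nat.card G.ConnectedComponent =
      ∑ w, Nat.card (G.induce (f ⁻¹' {w})).ConnectedComponent := by
  have hreach : ∀ a b, G.Reachable a b → f a = f b :=
    reachable_le_of_adj_le (Setoid.ker f).iseqv hf
  let F : G.ConnectedComponent → W :=
    ConnectedComponent.lift f fun a b p _ => hreach a b p.reachable
  have hfiber (w : W) :
      Nat.card (G.induce (f ⁻¹' {w})).ConnectedComponent = Nat.card {C // F C = w} := by
    let g : f ⁻¹' {w} → {C // F C = w} := fun a => ⟨G.connectedComponentMk a, a.2⟩
    refine card_connectedComponent_eq_card_of_surjective (g := g) ?_ fun a b => ?_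
    · rintro ⟨C, hC⟩
      obtain ⟨a, rfl⟩ := C.exists_rep
      exact ⟨⟨a, hC⟩, rfl⟩
    · obtain ⟨a, ha⟩ := a
      obtain ⟨b, hb⟩ := b
      rw [Subtype.ext_iff,
        reachable_induce_iff (s := f ⁻¹' {w}) (fun a b hab ha => (hf a b hab).symm.trans ha)]
      exact ConnectedComponent.eq.symm
  rw [← Nat.card_congr (Equiv.sigmaFiberEquiv F), Nat.card_sigma]
  exact Fintype.sum_congr _ _ fun w => (hfiber w).symm

def fiberGraph (f : V → W) : SimpleGraph V where
  Adj a b := a ≠ b ∧ f a = f b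
  symm := ⟨fun _ _ h => ⟨h.1.symm, h.2.symm⟩⟩
  loopless := ⟨fun _ h => h.1 rfl⟩

abbrev quotientGraph (G : SimpleGraph V) (f : V → W) : SimpleGraph W :=
  fromRel fun w w' => ∃ v v', G.Adj v v' ∧ f v = w ∧ f v' = w'

theorem reachable_fiberGraph_iff {f : V → W} {a b : V} :
    (fiberGraph f).Reachable a b ↔ f a = f b := by
  have hadj : ∀ a b, (fiberGraph f).Adj a b → f a = f b := fun _ _ h => h.2
  refine ⟨reachable_le_of_adj_le (Setoid.ker f).iseqv hadj a b, fun h => ?_⟩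
  by_cases hab : a = b
  · rw [hab]
  · exact Adj.reachable ⟨hab, h⟩

theorem card_connectedComponent_fiberGraph {f : V → W} (hf : f.Surjective) :
    Nat.card (fiberGraph f).ConnectedComponent = Nat.card W :=
  card_connectedComponent_eq_card_of_surjective hf fun _ _ => reachable_fiberGraph_iff

theorem induce_inf_fiberGraph (f : V → W) (w : W) :
    (G ⊓ fiberGraph f).induce (f ⁻¹' {w}) = G.induce (f ⁻¹' {w}) := by
  ext ⟨a, ha⟩ ⟨b, hb⟩
  simp only [induce_adj, inf_adj, fiberGraph, and_iff_left_iff_imp]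
  exact fun h => ⟨h.ne, ha.trans hb.symm⟩

theorem reachable_sup_fiberGraph_iff {f : V → W} (hf : f.Surjective) {a b : V} :
    (G ⊔ fiberGraph f).Reachable a b ↔ (G.quotientGraph f).Reachable (f a) (f b) := by
  constructor
  · intro h
    refine ConnectedComponent.exact (reachable_le_of_adj_le
      (Setoid.ker fun x => (G.quotientGraph f).connectedComponentMk (f x)).iseqv ?_ a b h)
    rintro x y (hxy | hxy)
    · by_cases hfxy : f x = f y
      · exact congrArg _ hfxy
      · exact ConnectedComponent.sound <| Adj.reachable <|
          (fromRel_adj _ _ _).2 ⟨hfxy, Or.inl ⟨x, y, hxy, rfl, rfl⟩⟩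
    · exact congrArg _ hxy.2
  · have hfiber (x y : V) (h : f x = f y) : (G ⊔ fiberGraph f).Reachable x y :=
      (reachable_fiberGraph_iff.2 h).mono le_sup_right
    let r (w w' : W) : Prop :=
      ∀ x y, f x = w → f y = w' → (G ⊔ fiberGraph f).Reachable x y
    have hr : Equivalence r :=
      { refl := fun _ x y hx hy => hfiber x y (hx.trans hy.symm)
        symm := fun h x y hx hy => (h y x hy hx).symm
        trans := fun {_ w _} h₁ h₂ x z hx hz => by
          obtain ⟨y, hy⟩ := hf w
          exact (h₁ x y hx hy).trans (h₂ y z hy hz) }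
    have hG (v v' : V) (h : G.Adj v v') : r (f v) (f v') := fun x y hx hy =>
      ((hfiber x v hx).trans (Adj.reachable (Or.inl h))).trans (hfiber v' y hy.symm)
    intro h
    refine reachable_le_of_adj_le hr ?_ _ _ h a b rfl rfl
    intro w w' hww'
    obtain ⟨-, ⟨v, v', hvv', rfl, rfl⟩ | ⟨v, v', hvv', rfl, rfl⟩⟩ :=
      (fromRel_adj _ _ _).1 hww'
    exacts [hG v v' hvv', hr.symm (hG v v' hvv')]

theorem card_connectedComponent_sup_fiberGraph {f : V → W} (hf : f.Surjective) :
    Nat.card (G ⊔ fiberGraph f).ConnectedComponent =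
      Nat.card (G.quotientGraph f).ConnectedComponent :=
  card_connectedComponent_eq_card_of_surjective (Quot.mk_surjective.comp hf) fun _ _ =>
    (reachable_sup_fiberGraph_iff hf).trans ConnectedComponent.eq.symm

theorem card_connectedComponent_inf_fiberGraph [Finite V] [Fintype W] (f : V → W) :
    Nat.card (G ⊓ fiberGraph f).ConnectedComponent =
      ∑ w, Nat.card (G.induce (f ⁻¹' {w})).ConnectedComponent := by
  have hf : ∀ a b, (G ⊓ fiberGraph f).Adj a b → f a = f b := fun _ _ h => h.2.2
  rw [card_connectedComponent_eq_sum_induce_fiber hf]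
  simp only [induce_inf_fiberGraph]

end SimpleGraph

/-- Lemma 3.1: for a finite graph `G` and a surjective map `f : V → W`,
`#Conn(G) ≤ #Conn(G/f) + Σ_{w ∈ W} (#Conn(G[f⁻¹(w)]) − 1)`, where the quotient graph `G/f`
has an edge between `w` and `w'` iff `G` has an edge between the fibers of `w` and `w'`. -/
theorem components_quotient_bound (V W : Type) [Fintype V] [Fintype W]
    (G : SimpleGraph V) (f : V → W) (hf : Function.Surjective f) :
    Nat.card G.ConnectedComponent ≤
      Nat.card (SimpleGraph.fromRel
          (fun w w' => ∃ v v', G.Adj v v' ∧ f v = w ∧ f v' = w')).ConnectedComponent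
        + ∑ w : W, (Nat.card (G.induce (f ⁻¹' {w})).ConnectedComponent - 1) := by
  show _ ≤ Nat.card (G.quotientGraph f).ConnectedComponent + _
  have key := SimpleGraph.card_connectedComponent_add_le_sup_add_inf G (.fiberGraph f)
  rw [SimpleGraph.card_connectedComponent_fiberGraph hf,
    SimpleGraph.card_connectedComponent_sup_fiberGraph hf,
    SimpleGraph.card_connectedComponent_inf_fiberGraph] at key
  have hsum : ∑ w, Nat.card (G.induce (f ⁻¹' {w})).ConnectedComponent ≤
      ∑ w, (Nat.card (G.induce (f ⁻¹' {w})).ConnectedComponent - 1) + Nat.card W := by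
    calc _ ≤ ∑ w, (Nat.card (G.induce (f ⁻¹' {w})).ConnectedComponent - 1 + 1) :=
          Finset.sum_le_sum fun _ _ => le_tsub_add
      _ = _ := by simp [Finset.sum_add_distrib, Nat.card_eq_fintype_card]
  omega
end
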